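/- arXiv:1803.10868 — 7 statements merged into one kernel-verified Lean document; each statement's English description precedes it below -/
import Mathlib

section
/- Let S be a finite subset of ℝ^n \ {0}. Then the number of homogeneous linear threshold functions on S equals the number of connected components of ℝ^n \ ⋃_{x ∈ S} x^⊥, where x^⊥ = {z ∈ ℝ^n : ⟨z, x⟩ = 0}. -/
private lemma convex_sign_ne {s r t : ℝ} (hs : s ≠ 0) (hr : r ≠ 0)
    (h : Real.sign s = Real.sign r) (ht0 : 0 ≤ t) (ht1 : t ≤ 1) :
    (1 - t) * s + t * r ≠ 0 := by
  rcases hs.lt_or_gt with hsn | hsp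
  · have hrn : r < 0 := by
      rcases hr.lt_or_gt with h' | h'
      · exact h'
      · rw [Real.sign_of_neg hsn, Real.sign_of_pos h'] at h; norm_num at h
    rcases eq_or_lt_of_le ht1 with rfl | ht1'
    · simpa using hr
    · have h1 : (1 - t) * s < 0 := mul_neg_of_pos_of_neg (by linarith) hsn
      have h2 : t * r ≤ 0 := mul_nonpos_of_nonneg_of_nonpos ht0 hrn.le
      linarith
  · have hrp : 0 < r := by
      rcases hr.lt_or_gt with h' | h'
      · rw [Real.sign_of_pos hsp, Real.sign_of_neg h'] at h; norm_num at h
      · exact h'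
    rcases eq_or_lt_of_le ht1 with rfl | ht1'
    · simpa using hr
    · have h1 : 0 < (1 - t) * s := mul_pos (by linarith) hsp
      have h2 : 0 ≤ t * r := mul_nonneg ht0 hrp.le
      positivity

theorem ltf_count_eq_regions (n : ℕ) (S : Set (Fin n → ℝ)) (hfin : S.Finite)
    (h0 : ∀ x ∈ S, x ≠ 0) :
    Nat.card {f : S → ℝ // ∃ a : Fin n → ℝ, ∀ x : S,
        (∑ i, a i * (x : Fin n → ℝ) i) ≠ 0 ∧
        f x = Real.sign (∑ i, a i * (x : Fin n → ℝ) i)} =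
      Nat.card (ConnectedComponents
        {z : Fin n → ℝ | ∀ x ∈ S, (∑ i, z i * x i) ≠ 0}) := by
  classical
  set T : Set (Fin n → ℝ) := {z : Fin n → ℝ | ∀ x ∈ S, (∑ i, z i * x i) ≠ 0} with hT
  set P : (S → ℝ) → Prop := fun f => ∃ a : Fin n → ℝ, ∀ x : S,
      (∑ i, a i * (x : Fin n → ℝ) i) ≠ 0 ∧
      f x = Real.sign (∑ i, a i * (x : Fin n → ℝ) i) with hP
  -- key lemma A : same component → same sign function
  have keyA : ∀ (a b : T), connectedComponent a = connectedComponent b →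
      ∀ x : S, Real.sign (∑ i, (a : Fin n → ℝ) i * (x : Fin n → ℝ) i)
        = Real.sign (∑ i, (b : Fin n → ℝ) i * (x : Fin n → ℝ) i) := by
    intro a b hab x
    have hcont : Continuous fun z : T => ∑ i, (z : Fin n → ℝ) i * (x : Fin n → ℝ) i := by
      apply continuous_finset_sum
      intro i _
      exact ((continuous_apply i).comp continuous_subtype_val).mul continuous_const
    set U : Set T := {z : T | 0 < ∑ i, (z : Fin n → ℝ) i * (x : Fin n → ℝ) i} with hU
    set V : Set T := {z : T | ∑ i, (z : Fin n → ℝ) i * (x : Fin n → ℝ) i < 0} with hV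
    have hUo : IsOpen U := isOpen_lt (continuous_const : Continuous fun _ : T => (0:ℝ)) hcont
    have hVo : IsOpen V := isOpen_lt hcont (continuous_const : Continuous fun _ : T => (0:ℝ))
    have hdisj : Disjoint U V := by
      rw [Set.disjoint_left]; intro z hz1 hz2
      simp only [hU, hV, Set.mem_setOf_eq] at hz1 hz2
      linarith
    have hcover : connectedComponent a ⊆ U ∪ V := by
      intro z _
      rcases (z.2 x x.2).lt_or_gt with h' | h'
      · exact Or.inr h'
      · exact Or.inl h'
    have hpre : IsPreconnected (connectedComponent a) := isPreconnected_connectedComponent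
    have ha : a ∈ connectedComponent a := mem_connectedComponent
    have hb : b ∈ connectedComponent a := hab ▸ mem_connectedComponent
    rcases hpre.subset_or_subset hUo hVo hdisj hcover with hsub | hsub
    · rw [Real.sign_of_pos (hsub ha), Real.sign_of_pos (hsub hb)]
    · rw [Real.sign_of_neg (hsub ha), Real.sign_of_neg (hsub hb)]
  -- key lemma B : same sign function → same component
  have keyB : ∀ (a b : T),
      (∀ x : S, Real.sign (∑ i, (a : Fin n → ℝ) i * (x : Fin n → ℝ) i)
        = Real.sign (∑ i, (b : Fin n → ℝ) i * (x : Fin n → ℝ) i)) →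
      connectedComponent a = connectedComponent b := by
    intro a b hsame
    apply connectedComponent_eq
    apply pathComponent_subset_component
    -- path : t ↦ (1-t) • a + t • b
    have hmem : ∀ t : unitInterval,
        ((1 - (t : ℝ)) • (a : Fin n → ℝ) + (t : ℝ) • (b : Fin n → ℝ)) ∈ T := by
      intro t x hx
      have hexp : (∑ i, ((1 - (t : ℝ)) • (a : Fin n → ℝ) + (t : ℝ) • (b : Fin n → ℝ)) i * x i)
          = (1 - (t : ℝ)) * (∑ i, (a : Fin n → ℝ) i * x i)
            + (t : ℝ) * (∑ i, (b : Fin n → ℝ) i * x i) := by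
        rw [Finset.mul_sum, Finset.mul_sum, ← Finset.sum_add_distrib]
        apply Finset.sum_congr rfl
        intro i _
        simp [Pi.add_apply, Pi.smul_apply, smul_eq_mul]
        ring
      rw [hexp]
      exact convex_sign_ne (a.2 x hx) (b.2 x hx) (hsame ⟨x, hx⟩) t.2.1 t.2.2
    refine ⟨⟨⟨fun t => ⟨(1 - (t : ℝ)) • (a : Fin n → ℝ) + (t : ℝ) • (b : Fin n → ℝ), hmem t⟩,
        ?_⟩, ?_, ?_⟩⟩
    · apply Continuous.subtype_mk
      have hc : Continuous fun t : unitInterval => (t : ℝ) := continuous_subtype_val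
      exact ((continuous_const.sub hc).smul continuous_const).add (hc.smul continuous_const)
    · apply Subtype.ext; simp
    · apply Subtype.ext; simp
  -- sign functions of points of T satisfy P
  have hFP : ∀ a : T, P (fun x : S => Real.sign (∑ i, (a : Fin n → ℝ) i * (x : Fin n → ℝ) i)) := by
    intro a
    exact ⟨(a : Fin n → ℝ), fun x => ⟨a.2 x x.2, rfl⟩⟩
  -- the map G : Subtype P → ConnectedComponents T
  have hchoice : ∀ f : Subtype P, f.2.choose ∈ T := by
    intro f x hx
    exact (f.2.choose_spec ⟨x, hx⟩).1
  set G : Subtype P → ConnectedComponents T :=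
    fun f => ConnectedComponents.mk ⟨f.2.choose, hchoice f⟩ with hG
  have hGinj : Function.Injective G := by
    intro f g hfg
    rw [hG] at hfg
    have hcc := ConnectedComponents.coe_eq_coe.mp hfg
    have hsigns := keyA _ _ hcc
    apply Subtype.ext
    funext x
    have h1 := (f.2.choose_spec x).2
    have h2 := (g.2.choose_spec x).2
    rw [h1, h2]
    exact hsigns x
  have hGsurj : Function.Surjective G := by
    intro c
    obtain ⟨a, rfl⟩ := ConnectedComponents.surjective_coe c
    refine ⟨⟨fun x : S => Real.sign (∑ i, (a : Fin n → ℝ) i * (x : Fin n → ℝ) i), hFP a⟩, ?_⟩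
    rw [hG]
    apply ConnectedComponents.coe_eq_coe.mpr
    apply keyB
    intro x
    exact ((hFP a).choose_spec x).2.symm
  exact Nat.card_eq_of_bijective G ⟨hGinj, hGsurj⟩
end

section
/- Let p ≥ m be positive integers and let H₁, …, H_p be affine hyperplanes in ℝ^m. Then the number of regions of the arrangement, i.e., the number of connected components of ℝ^m \ (H₁ ∪ ⋯ ∪ H_p), is at most binom(p, ≤ m) = ∑_{i=0}^{m} binom(p, i). -/
/-!
Each region of the arrangement `{gᵢ = 0}` of affine functions is the convex cell on which the
`gᵢ` have a prescribed sign vector, so it suffices to count the realisable sign vectors.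
Restricting a realisable vector of `g₁, …, g_{p+1}` to its first `p` entries is at most
two-to-one, and a vector `t` has two extensions only if its cell meets the hyperplane
`{g_{p+1} = 0}` (by the intermediate value theorem on a segment), where `t` is realised by `p`
affine functions on a space of one dimension less. Hence the count `N(p, d)` satisfies
`N(p + 1, d) ≤ N(p, d) + N(p, d - 1)`, the Pascal recursion of `∑_{i ≤ d} (p choose i)`.
-/

open Finset Module

section SignPatterns

variable {E : Type*} [AddCommGroup E] [Module ℝ E] {p : ℕ}

def halfLine (b : Bool) : Set ℝ := if b then Set.Ioi 0 else Set.Iio 0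

theorem convex_halfLine (b : Bool) : Convex ℝ (halfLine b) := by
  cases b
  exacts [convex_Iio 0, convex_Ioi 0]

theorem halfLine_true : halfLine true = Set.Ioi 0 := rfl

theorem halfLine_false : halfLine false = Set.Iio 0 := rfl

theorem mem_halfLine_iff {r : ℝ} {b : Bool} : r ∈ halfLine b ↔ r ≠ 0 ∧ decide (0 < r) = b := by
  cases b <;> simp only [halfLine_true, halfLine_false, Set.mem_Ioi, Set.mem_Iio] <;> grind

def signCell (g : Fin p → E →ᵃ[ℝ] ℝ) (s : Fin p → Bool) : Set E :=
  ⋂ i, g i ⁻¹' halfLine (s i)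

theorem convex_signCell (g : Fin p → E →ᵃ[ℝ] ℝ) (s : Fin p → Bool) :
    Convex ℝ (signCell g s) :=
  convex_iInter fun i => (convex_halfLine (s i)).affine_preimage (g i)

theorem mem_signCell_iff {g : Fin p → E →ᵃ[ℝ] ℝ} {s : Fin p → Bool} {z : E} :
    z ∈ signCell g s ↔ (∀ i, g i z ≠ 0) ∧ (fun i => decide (0 < g i z)) = s := by
  simp only [signCell, Set.mem_iInter, Set.mem_preimage, mem_halfLine_iff, funext_iff]
  exact forall_and

theorem signCell_comp {F : Type*} [AddCommGroup F] [Module ℝ F]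
    (g : Fin p → E →ᵃ[ℝ] ℝ) (φ : F →ᵃ[ℝ] E) (s : Fin p → Bool) :
    signCell (fun i => (g i).comp φ) s = φ ⁻¹' signCell g s := by
  simp only [signCell, Set.preimage_iInter, AffineMap.coe_comp, Set.preimage_comp]

theorem signCell_snoc (g : Fin (p + 1) → E →ᵃ[ℝ] ℝ) (t : Fin p → Bool) (b : Bool) :
    signCell g (Fin.snoc t b) = signCell (Fin.init g) t ∩ g (Fin.last p) ⁻¹' halfLine b := by
  ext z
  simp [signCell, Fin.forall_fin_succ', Fin.init]

open Classical in
noncomputable def signPatterns (g : Fin p → E →ᵃ[ℝ] ℝ) : Finset (Fin p → Bool) :=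
  {s | (signCell g s).Nonempty}

theorem mem_signPatterns {g : Fin p → E →ᵃ[ℝ] ℝ} {s : Fin p → Bool} :
    s ∈ signPatterns g ↔ (signCell g s).Nonempty := by
  simp [signPatterns]

theorem image_init_signPatterns_subset (g : Fin (p + 1) → E →ᵃ[ℝ] ℝ) :
    (signPatterns g).image Fin.init ⊆ signPatterns (Fin.init g) := by
  intro t ht
  obtain ⟨s, hs, rfl⟩ := mem_image.mp ht
  rw [mem_signPatterns, ← Fin.snoc_init_self s, signCell_snoc] at hs
  exact mem_signPatterns.mpr (hs.mono Set.inter_subset_left)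

theorem snoc_mem_signPatterns_iff {g : Fin (p + 1) → E →ᵃ[ℝ] ℝ} {t : Fin p → Bool} {b : Bool} :
    Fin.snoc t b ∈ signPatterns g ↔
      ∃ z ∈ signCell (Fin.init g) t, g (Fin.last p) z ∈ halfLine b := by
  rw [mem_signPatterns, signCell_snoc]
  rfl

theorem exists_mem_segment_eq_zero (h : E →ᵃ[ℝ] ℝ) {x y : E} (hx : 0 < h x) (hy : h y < 0) :
    ∃ w ∈ segment ℝ x y, h w = 0 := by
  have h0 : (0 : ℝ) ∈ h '' segment ℝ x y := by
    rw [image_segment, segment_eq_uIcc]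
    exact Set.mem_uIcc.mpr (Or.inr ⟨hy.le, hx.le⟩)
  exact h0

theorem exists_mem_signCell_init_eq_zero {g : Fin (p + 1) → E →ᵃ[ℝ] ℝ} {t : Fin p → Bool}
    (htrue : Fin.snoc t true ∈ signPatterns g) (hfalse : Fin.snoc t false ∈ signPatterns g) :
    ∃ w ∈ signCell (Fin.init g) t, g (Fin.last p) w = 0 := by
  obtain ⟨x, hx, hx_pos⟩ := snoc_mem_signPatterns_iff.mp htrue
  obtain ⟨y, hy, hy_neg⟩ := snoc_mem_signPatterns_iff.mp hfalse
  obtain ⟨w, hw, hw_zero⟩ := exists_mem_segment_eq_zero _ hx_pos hy_neg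
  exact ⟨w, (convex_signCell _ t).segment_subset hx hy hw, hw_zero⟩

theorem exists_affineMap_ker_subset_range (h : E →ᵃ[ℝ] ℝ) :
    ∃ φ : LinearMap.ker h.linear →ᵃ[ℝ] E, h ⁻¹' {0} ⊆ Set.range φ := by
  by_cases hzero : ∃ w₀, h w₀ = 0
  · obtain ⟨w₀, hw₀⟩ := hzero
    refine ⟨(AffineEquiv.vaddConst ℝ w₀).toAffineMap.comp
      (LinearMap.ker h.linear).subtype.toAffineMap, fun w hw => ⟨⟨w - w₀, ?_⟩, ?_⟩⟩
    · rw [LinearMap.mem_ker, ← vsub_eq_sub, AffineMap.linearMap_vsub, hw, hw₀, vsub_self]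
    · simp
  · push Not at hzero
    exact ⟨AffineMap.const ℝ _ 0, fun w hw => (hzero w hw).elim⟩

end SignPatterns

theorem card_le_card_image_init_add_card_filter {n : ℕ} (S : Finset (Fin (n + 1) → Bool)) :
    #S ≤ #(S.image Fin.init) + #{t | Fin.snoc t true ∈ S ∧ Fin.snoc t false ∈ S} := by
  have hinj : ∀ b, Set.InjOn Fin.init {s : Fin (n + 1) → Bool | s (Fin.last n) = b} :=
    fun b s hs t ht hst => by rw [← Fin.snoc_init_self s, ← Fin.snoc_init_self t, hst, hs, ht]
  set A := {s ∈ S | s (Fin.last n) = true}.image Fin.init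
  set B := {s ∈ S | ¬s (Fin.last n) = true}.image Fin.init
  calc #S = #{s ∈ S | s (Fin.last n) = true} + #{s ∈ S | ¬s (Fin.last n) = true} :=
        (card_filter_add_card_filter_not _).symm
    _ = #A + #B := by
        rw [card_image_of_injOn (s := {s ∈ S | s (Fin.last n) = true})
            ((hinj true).mono fun s hs => (mem_filter.mp hs).2),
          card_image_of_injOn (s := {s ∈ S | ¬s (Fin.last n) = true})
            ((hinj false).mono fun s hs => by simpa using (mem_filter.mp hs).2)]
    _ = #(A ∪ B) + #(A ∩ B) := (card_union_add_card_inter A B).symm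
    _ ≤ _ := by
        gcongr
        · exact union_subset (image_subset_image (filter_subset _ _))
            (image_subset_image (filter_subset _ _))
        · intro t ht
          simp only [A, B, mem_inter, mem_image, mem_filter, Bool.not_eq_true] at ht
          obtain ⟨⟨s, ⟨hs, hs_last⟩, rfl⟩, ⟨s', ⟨hs', hs'_last⟩, hss'⟩⟩ := ht
          rw [mem_filter, ← hs_last, Fin.snoc_init_self, ← hss', ← hs'_last, Fin.snoc_init_self]
          exact ⟨mem_univ _, hs, hs'⟩

theorem sum_range_choose_succ_succ (p k : ℕ) :
    ∑ i ∈ range (k + 2), (p + 1).choose i =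
      ∑ i ∈ range (k + 2), p.choose i + ∑ i ∈ range (k + 1), p.choose i := by
  rw [sum_range_succ' (fun i => (p + 1).choose i), sum_range_succ' (fun i => p.choose i)]
  simp only [Nat.choose_succ_succ', sum_add_distrib, Nat.choose_zero_right]
  ring

theorem card_signPatterns_le {E : Type*} [AddCommGroup E] [Module ℝ E] [FiniteDimensional ℝ E]
    {p : ℕ} (g : Fin p → E →ᵃ[ℝ] ℝ) :
    #(signPatterns g) ≤ ∑ i ∈ range (finrank ℝ E + 1), p.choose i := by
  induction p generalizing E with
  | zero =>
    refine (card_le_univ _).trans ?_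
    simp [sum_range_succ']
  | succ p ih =>
    refine (card_le_card_image_init_add_card_filter _).trans ?_
    set D : Finset (Fin p → Bool) :=
      {t | Fin.snoc t true ∈ signPatterns g ∧ Fin.snoc t false ∈ signPatterns g}
    have hinit :
        #((signPatterns g).image Fin.init) ≤ ∑ i ∈ range (finrank ℝ E + 1), p.choose i :=
      (card_le_card (image_init_signPatterns_subset g)).trans (ih _)
    rcases D.eq_empty_or_nonempty with hD | ⟨t, ht⟩
    · rw [hD, card_empty, add_zero]
      exact hinit.trans (sum_le_sum fun i _ => Nat.choose_le_choose i p.le_succ)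
    have hD_zero : ∀ t ∈ D, ∃ w ∈ signCell (Fin.init g) t, g (Fin.last p) w = 0 :=
      fun t ht => exists_mem_signCell_init_eq_zero (mem_filter.mp ht).2.1 (mem_filter.mp ht).2.2
    have hlin : (g (Fin.last p)).linear ≠ 0 := by
      intro h0
      obtain ⟨q, hq⟩ := (AffineMap.linear_eq_zero_iff_exists_const _).mp h0
      have hconst : ∀ z, g (Fin.last p) z = q := fun z => by rw [hq]; rfl
      obtain ⟨w, -, hw⟩ := hD_zero t ht
      obtain ⟨x, -, hx⟩ := snoc_mem_signPatterns_iff.mp (mem_filter.mp ht).2.1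
      rw [halfLine_true, Set.mem_Ioi] at hx
      linarith [hconst w, hconst x]
    obtain ⟨φ, hφ⟩ := exists_affineMap_ker_subset_range (g (Fin.last p))
    have hD_sub : D ⊆ signPatterns (fun i => (Fin.init g i).comp φ) := fun t ht => by
      obtain ⟨w, hw, hw_zero⟩ := hD_zero t ht
      obtain ⟨k, rfl⟩ := hφ hw_zero
      exact mem_signPatterns.mpr ⟨k, by rwa [signCell_comp]⟩
    have hrank := Module.Dual.finrank_ker_add_one_of_ne_zero hlin
    calc _ ≤ ∑ i ∈ range (finrank ℝ E + 1), p.choose i +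
          ∑ i ∈ range (finrank ℝ (LinearMap.ker (g (Fin.last p)).linear) + 1), p.choose i :=
          add_le_add hinit ((card_le_card hD_sub).trans (ih _))
      _ = _ := by rw [← hrank, sum_range_choose_succ_succ]

theorem card_connectedComponents_le_of_isPreconnected_preimage {X α : Type*}
    [TopologicalSpace X] [Finite α] (f : X → α) (hf : ∀ a, IsPreconnected (f ⁻¹' {a})) :
    Nat.card (ConnectedComponents X) ≤ Nat.card α := by
  have hsurj := ConnectedComponents.surjective_coe (α := X)
  refine Nat.card_le_card_of_injective (f ∘ Function.surjInv hsurj) fun q q' hqq' => ?_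
  rw [← Function.surjInv_eq hsurj q, ← Function.surjInv_eq hsurj q',
    ConnectedComponents.coe_eq_coe']
  exact (hf _).subset_connectedComponent rfl hqq'

theorem card_connectedComponents_le_card_signPatterns {E : Type*} [AddCommGroup E]
    [Module ℝ E] [TopologicalSpace E] [IsTopologicalAddGroup E] [ContinuousSMul ℝ E] {p : ℕ}
    (g : Fin p → E →ᵃ[ℝ] ℝ) :
    Nat.card (ConnectedComponents {z | ∀ i, g i z ≠ 0}) ≤ #(signPatterns g) := by
  let σ : {z | ∀ i, g i z ≠ 0} → signPatterns g := fun z =>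
    ⟨fun i => decide (0 < g i z), mem_signPatterns.mpr ⟨z, mem_signCell_iff.mpr ⟨z.2, rfl⟩⟩⟩
  rw [← Nat.card_eq_finsetCard]
  refine card_connectedComponents_le_of_isPreconnected_preimage σ fun s => ?_
  have hfiber : σ ⁻¹' {s} = Subtype.val ⁻¹' signCell g s := by
    ext z
    simp only [Set.mem_preimage, Set.mem_singleton_iff, mem_signCell_iff, Subtype.ext_iff, σ]
    exact (and_iff_right z.2).symm
  have hcell : signCell g s ⊆ {z | ∀ i, g i z ≠ 0} := fun z hz => (mem_signCell_iff.mp hz).1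
  rw [hfiber, ← Topology.IsInducing.subtypeVal.isPreconnected_image, Subtype.image_preimage_coe,
    Set.inter_eq_right.mpr hcell]
  exact (convex_signCell g s).isPreconnected

theorem regions_upper_bound_general (p m : ℕ)
    (a : Fin p → Fin m → ℝ) (b : Fin p → ℝ) :
    Nat.card (ConnectedComponents
        {z : Fin m → ℝ | ∀ i : Fin p, (∑ j, a i j * z j) ≠ b i}) ≤
      ∑ i ∈ Finset.range (m + 1), p.choose i := by
  let g : Fin p → (Fin m → ℝ) →ᵃ[ℝ] ℝ := fun i =>
    (dotProductEquiv ℝ (Fin m) (a i)).toAffineMap - AffineMap.const ℝ _ (b i)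
  have hregions : {z : Fin m → ℝ | ∀ i : Fin p, (∑ j, a i j * z j) ≠ b i} =
      {z | ∀ i, g i z ≠ 0} := by
    ext z
    simp [g, dotProduct, sub_eq_zero]
  rw [hregions]
  calc _ ≤ #(signPatterns g) := card_connectedComponents_le_card_signPatterns g
    _ ≤ _ := by simpa only [finrank_fin_fun] using card_signPatterns_le g

theorem regions_upper_bound (p m : ℕ) (hm : 1 ≤ m) (hpm : m ≤ p)
    (a : Fin p → Fin m → ℝ) (b : Fin p → ℝ) (ha : ∀ i, a i ≠ 0) :
    Nat.card (ConnectedComponents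
        {z : Fin m → ℝ | ∀ i : Fin p, (∑ j, a i j * z j) ≠ b i}) ≤
      ∑ i ∈ Finset.range (m + 1), p.choose i :=
  regions_upper_bound_general p m a b
end

section
/- Let H₁, …, H_p be affine hyperplanes in ℝ^m. Then the number of regions of the arrangement (connected components of ℝ^m \ (H₁ ∪ ⋯ ∪ H_p)) is at least the number of distinct nonempty intersection subspaces, i.e., the number of distinct nonempty sets of the form ⋂_{i ∈ F} H_i over subsets F ⊆ {1, …, p}, where the intersection over the empty family is all of ℝ^m. -/
/-!
Each region of the arrangement is the cell of exactly one realized sign vector: cells are convex,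
and every affine functional keeps its sign on a connected component of the complement. So it
suffices to show that there are at least as many realized sign vectors as nonempty flats.

This is proved by deletion–restriction, inside an arbitrary affine subspace `E` so that the
induction can pass from `E` to `E ∩ H` for the last hyperplane `H`. A flat either does not need
`H` (a flat of the deletion) or lies in `H` (a flat of the restriction). Each cell of the deletion
gives a cell, and each cell of the restriction gives a second one on the other side of `H`. When
`H` cuts `E` along the trace of an earlier hyperplane, the restriction is degenerate; but then `H`
creates no new flat, and deletion alone suffices.
-/

open Set Filter Topology AffineMap

namespace HyperplaneArrangement

variable {V : Type*} [AddCommGroup V] [Module ℝ V] {p : ℕ}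

def hyperplane (g : V →ᵃ[ℝ] ℝ) : AffineSubspace ℝ V :=
  ((⊥ : Submodule ℝ ℝ) : AffineSubspace ℝ ℝ).comap g

def flats (E : Set V) (f : Fin p → V →ᵃ[ℝ] ℝ) : Set (Set V) :=
  {T | T.Nonempty ∧ ∃ F : Finset (Fin p), T = E ∩ ⋂ i ∈ F, {z | f i z = 0}}

theorem finite_flats (E : Set V) (f : Fin p → V →ᵃ[ℝ] ℝ) : (flats E f).Finite :=
  (finite_range fun F : Finset (Fin p) ↦ E ∩ ⋂ i ∈ F, {z | f i z = 0}).subset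
    fun _ ⟨_, F, hT⟩ ↦ ⟨F, hT.symm⟩

theorem flats_subset_union (E : Set V) (f : Fin (p + 1) → V →ᵃ[ℝ] ℝ) :
    flats E f ⊆ flats E (Fin.init f) ∪ flats (E ∩ {z | f (Fin.last p) z = 0}) (Fin.init f) := by
  classical
  rintro T ⟨hT, F, rfl⟩
  have hF : ∀ z, (∀ i ∈ F, f i z = 0) ↔ (Fin.last p ∈ F → f (Fin.last p) z = 0) ∧
      ∀ i : Fin p, i.castSucc ∈ F → f i.castSucc z = 0 := fun z ↦ by
    rw [Fin.forall_fin_succ', and_comm]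
  by_cases hL : Fin.last p ∈ F
  · refine Or.inr ⟨hT, Finset.univ.filter (·.castSucc ∈ F), ?_⟩
    ext z
    simp [hF, hL, Fin.init, and_assoc]
  · refine Or.inl ⟨hT, Finset.univ.filter (·.castSucc ∈ F), ?_⟩
    ext z
    simp [hF, hL, Fin.init]

theorem inter_zero_subset_zero_symm (E : AffineSubspace ℝ V) {g h : V →ᵃ[ℝ] ℝ} {x : V}
    (hxE : x ∈ E) (hgx : g x = 0) (hgh : (E : Set V) ∩ {z | g z = 0} ⊆ {z | h z = 0})
    (hE : ¬ (E : Set V) ⊆ {z | h z = 0}) : (E : Set V) ∩ {z | h z = 0} ⊆ {z | g z = 0} := by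
  rintro y ⟨hyE, hhy⟩
  by_contra hgy
  obtain ⟨u, huE, hhu⟩ := not_subset.1 hE
  have hhx : h x = 0 := hgh ⟨hxE, hgx⟩
  -- `h` is constant along `y - x` but `g` is not: moving `u` that way reaches a zero of `g` in `E`
  -- at which `h` is still nonzero.
  set w := (-(g u / g y)) • (y -ᵥ x) +ᵥ u
  have hwE : w ∈ E :=
    AffineSubspace.vadd_mem_of_mem_direction
      (Submodule.smul_mem _ _ (AffineSubspace.vsub_mem_direction hyE hxE)) huE
  have hval : ∀ k : V →ᵃ[ℝ] ℝ, k w = -(g u / g y) * (k y - k x) + k u := fun k ↦ by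
    rw [AffineMap.map_vadd, LinearMap.map_smul, linearMap_vsub]; rfl
  have hgw : g w = 0 := by
    rw [hval, hgx]
    field_simp [show g y ≠ 0 from hgy]
    ring
  have hhw : h w = h u := by rw [hval, hhx, show h y = 0 from hhy]; ring
  exact hhu (show h u = 0 from hhw ▸ hgh ⟨hwE, hgw⟩)

def signCell (f : Fin p → V →ᵃ[ℝ] ℝ) (σ : Fin p → Bool) : Set V :=
  {z | ∀ i, if σ i then 0 < f i z else f i z < 0}

noncomputable def signVector (f : Fin p → V →ᵃ[ℝ] ℝ) (z : V) : Fin p → Bool :=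
  fun i ↦ decide (0 < f i z)

def signVectors (E : Set V) (f : Fin p → V →ᵃ[ℝ] ℝ) : Set (Fin p → Bool) :=
  {σ | (E ∩ signCell f σ).Nonempty}

theorem mem_signCell_snoc {f : Fin (p + 1) → V →ᵃ[ℝ] ℝ} {σ : Fin p → Bool} {b : Bool} {z : V} :
    z ∈ signCell f (Fin.snoc σ b) ↔
      z ∈ signCell (Fin.init f) σ ∧ if b then 0 < f (Fin.last p) z else f (Fin.last p) z < 0 := by
  simp only [signCell, mem_ofPred_eq, Fin.forall_fin_succ', Fin.snoc_castSucc, Fin.snoc_last,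
    Fin.init]

theorem eventually_lineMap_mem_signCell {f : Fin p → V →ᵃ[ℝ] ℝ} {σ : Fin p → Bool} {x : V}
    (hx : x ∈ signCell f σ) (y : V) : ∀ᶠ t in 𝓝 (0 : ℝ), lineMap x y t ∈ signCell f σ := by
  refine eventually_all.2 fun i ↦ ?_
  have hcont : Continuous fun t : ℝ ↦ f i (lineMap x y t) := by
    simp only [apply_lineMap, lineMap_apply_ring']
    fun_prop
  have hx0 : f i (lineMap x y (0 : ℝ)) = f i x := by rw [lineMap_apply_zero]
  have hxi := hx i
  split_ifs at hxi ⊢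
  · exact continuousAt_const.eventually_lt hcont.continuousAt (hx0 ▸ hxi)
  · exact hcont.continuousAt.eventually_lt continuousAt_const (hx0 ▸ hxi)

theorem snoc_mem_signVectors_of_mem_zero (E : AffineSubspace ℝ V) {f : Fin (p + 1) → V →ᵃ[ℝ] ℝ}
    {σ : Fin p → Bool} {x : V} (hxE : x ∈ E) (hx : x ∈ signCell (Fin.init f) σ)
    (hfx : f (Fin.last p) x = 0) (hE : ¬ (E : Set V) ⊆ {z | f (Fin.last p) z = 0}) (b : Bool) :
    Fin.snoc σ b ∈ signVectors E f := by
  obtain ⟨y, hyE, hy⟩ := not_subset.1 hE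
  have hline : ∀ t : ℝ, f (Fin.last p) (lineMap x y t) = t * f (Fin.last p) y := by
    intro t; simp [apply_lineMap, lineMap_apply_ring', hfx]
  have hcell := eventually_lineMap_mem_signCell hx y
  obtain ⟨t₁, ht₁, ht₁pos⟩ :=
    ((hcell.filter_mono nhdsWithin_le_nhds).and (self_mem_nhdsWithin (s := Ioi 0))).exists
  obtain ⟨t₂, ht₂, ht₂neg⟩ :=
    ((hcell.filter_mono nhdsWithin_le_nhds).and (self_mem_nhdsWithin (s := Iio 0))).exists
  have key : ∀ t, lineMap x y t ∈ signCell (Fin.init f) σ →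
      (if b then 0 < t * f (Fin.last p) y else t * f (Fin.last p) y < 0) →
      Fin.snoc σ b ∈ signVectors E f := fun t ht hsign ↦
    ⟨lineMap x y t, lineMap_mem t hxE hyE, mem_signCell_snoc.2 ⟨ht, hline t ▸ hsign⟩⟩
  rcases (show f (Fin.last p) y ≠ 0 from hy).lt_or_gt with hc | hc <;> cases b
  · exact key t₁ ht₁ (mul_neg_of_pos_of_neg ht₁pos hc)
  · exact key t₂ ht₂ (mul_pos_of_neg_of_neg ht₂neg hc)
  · exact key t₂ ht₂ (mul_neg_of_neg_of_pos ht₂neg hc)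
  · exact key t₁ ht₁ (mul_pos ht₁pos hc)

theorem exists_snoc_mem_signVectors (E : AffineSubspace ℝ V) {f : Fin (p + 1) → V →ᵃ[ℝ] ℝ}
    {σ : Fin p → Bool} (hσ : σ ∈ signVectors E (Fin.init f))
    (hE : ¬ (E : Set V) ⊆ {z | f (Fin.last p) z = 0}) : ∃ b, Fin.snoc σ b ∈ signVectors E f := by
  obtain ⟨x, hxE, hx⟩ := hσ
  by_cases hfx : f (Fin.last p) x = 0
  · exact ⟨true, snoc_mem_signVectors_of_mem_zero E hxE hx hfx hE true⟩
  · refine ⟨decide (0 < f (Fin.last p) x), x, hxE, mem_signCell_snoc.2 ⟨hx, ?_⟩⟩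
    by_cases hpos : 0 < f (Fin.last p) x
    · simp [hpos]
    · simpa [hpos] using lt_of_le_of_ne (not_lt.1 hpos) hfx

theorem ncard_signVectors_add_ncard_signVectors_inter_le (E : AffineSubspace ℝ V)
    (f : Fin (p + 1) → V →ᵃ[ℝ] ℝ) (hE : ¬ (E : Set V) ⊆ {z | f (Fin.last p) z = 0}) :
    (signVectors E (Fin.init f)).ncard +
        (signVectors (E ∩ {z | f (Fin.last p) z = 0}) (Fin.init f)).ncard ≤
      (signVectors E f).ncard := by
  classical
  set c : (Fin p → Bool) → Bool := fun σ ↦ decide (Fin.snoc σ true ∈ signVectors E f)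
  have hleft : ∀ σ ∈ signVectors E (Fin.init f), Fin.snoc σ (c σ) ∈ signVectors E f := by
    intro σ hσ
    by_cases htrue : Fin.snoc σ true ∈ signVectors E f
    · simp [c, htrue]
    · obtain ⟨b, hb⟩ := exists_snoc_mem_signVectors E hσ hE
      cases b
      · simpa [c, htrue] using hb
      · exact absurd hb htrue
  have hright : ∀ σ ∈ signVectors (E ∩ {z | f (Fin.last p) z = 0}) (Fin.init f),
      Fin.snoc σ (!c σ) ∈ signVectors E f := by
    rintro σ ⟨x, ⟨hxE, hfx⟩, hx⟩
    exact snoc_mem_signVectors_of_mem_zero E hxE hx hfx hE _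
  let g : signVectors E (Fin.init f) ⊕ signVectors (E ∩ {z | f (Fin.last p) z = 0}) (Fin.init f) →
      signVectors E f :=
    Sum.elim (fun σ ↦ ⟨_, hleft σ σ.2⟩) (fun σ ↦ ⟨_, hright σ σ.2⟩)
  have hg : Function.Injective g := by
    rintro (σ | σ) (τ | τ) h <;> simp [g, Subtype.ext_iff] at h ⊢ <;> grind
  rw [← Nat.card_coe_set_eq, ← Nat.card_coe_set_eq, ← Nat.card_coe_set_eq, ← Nat.card_sum]
  exact Nat.card_le_card_of_injective g hg

theorem flats_inter_subset_flats (E : AffineSubspace ℝ V) (f : Fin p → V →ᵃ[ℝ] ℝ)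
    {g : V →ᵃ[ℝ] ℝ} {i : Fin p} (hgi : (E : Set V) ∩ {z | g z = 0} ⊆ {z | f i z = 0})
    (hE : ¬ (E : Set V) ⊆ {z | f i z = 0}) :
    flats ((E : Set V) ∩ {z | g z = 0}) f ⊆ flats E f := by
  classical
  rintro T ⟨⟨x, hx⟩, F, rfl⟩
  have hig := inter_zero_subset_zero_symm E hx.1.1 hx.1.2 hgi hE
  refine ⟨⟨x, hx⟩, insert i F, ?_⟩
  ext z
  simp only [mem_inter_iff, mem_iInter, Finset.mem_insert, forall_eq_or_imp]
  exact ⟨fun ⟨⟨hzE, hgz⟩, hzF⟩ ↦ ⟨hzE, hgi ⟨hzE, hgz⟩, hzF⟩,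
    fun ⟨hzE, hfz, hzF⟩ ↦ ⟨⟨hzE, hig ⟨hzE, hfz⟩⟩, hzF⟩⟩

theorem ncard_flats_le_ncard_signVectors (E : AffineSubspace ℝ V) (f : Fin p → V →ᵃ[ℝ] ℝ)
    (hf : ∀ i, ¬ (E : Set V) ⊆ {z | f i z = 0}) : (flats E f).ncard ≤ (signVectors E f).ncard := by
  induction p generalizing E with
  | zero =>
    have hsub : flats E f ⊆ (fun _ ↦ (E : Set V)) '' signVectors E f := by
      rintro T ⟨⟨x, hx⟩, F, rfl⟩
      refine ⟨Fin.elim0, ⟨x, ?_, fun i ↦ i.elim0⟩, ?_⟩ <;> simp_all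
    exact (ncard_le_ncard hsub ((toFinite _).image _)).trans (ncard_image_le (toFinite _))
  | succ p ih =>
    set H : Set V := {z | f (Fin.last p) z = 0}
    have hsplit : (signVectors E (Fin.init f)).ncard + (signVectors (E ∩ H) (Fin.init f)).ncard ≤
        (signVectors E f).ncard :=
      ncard_signVectors_add_ncard_signVectors_inter_le E f (hf (Fin.last p))
    have ih' := ih E (Fin.init f) fun i ↦ hf i.castSucc
    by_cases hdup : ∃ i : Fin p, (E : Set V) ∩ H ⊆ {z | Fin.init f i z = 0}
    · obtain ⟨i, hi⟩ := hdup
      have hsub : flats E f ⊆ flats E (Fin.init f) :=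
        (flats_subset_union E f).trans
          (union_subset subset_rfl (flats_inter_subset_flats E (Fin.init f) hi (hf i.castSucc)))
      calc (flats E f).ncard ≤ (flats E (Fin.init f)).ncard :=
            ncard_le_ncard hsub (finite_flats _ _)
        _ ≤ (signVectors E (Fin.init f)).ncard := ih'
        _ ≤ (signVectors E f).ncard := by omega
    · push Not at hdup
      have ih'' : (flats (E ∩ H) (Fin.init f)).ncard ≤ (signVectors (E ∩ H) (Fin.init f)).ncard :=
        ih (E ⊓ hyperplane (f (Fin.last p))) (Fin.init f) hdup
      calc (flats E f).ncard ≤ (flats E (Fin.init f) ∪ flats (E ∩ H) (Fin.init f)).ncard :=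
            ncard_le_ncard (flats_subset_union E f) ((finite_flats _ _).union (finite_flats _ _))
        _ ≤ (flats E (Fin.init f)).ncard + (flats (E ∩ H) (Fin.init f)).ncard := ncard_union_le _ _
        _ ≤ (signVectors E f).ncard := by omega

theorem mem_signCell_iff {f : Fin p → V →ᵃ[ℝ] ℝ} {σ : Fin p → Bool} {z : V} :
    z ∈ signCell f σ ↔ (∀ i, f i z ≠ 0) ∧ signVector f z = σ := by
  simp only [signCell, mem_ofPred_eq, signVector, funext_iff, ← forall_and]
  exact forall_congr' fun i ↦ by cases σ i <;> grind

theorem convex_signCell (f : Fin p → V →ᵃ[ℝ] ℝ) (σ : Fin p → Bool) : Convex ℝ (signCell f σ) := by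
  simp only [signCell, ofPred_forall]
  refine convex_iInter fun i ↦ ?_
  cases σ i
  · exact (convex_Iio 0).affine_preimage (f i)
  · exact (convex_Ioi 0).affine_preimage (f i)

variable [TopologicalSpace V] [ContinuousAdd V] [ContinuousSMul ℝ V]

theorem natCard_connectedComponents_eq_ncard_signVectors (f : Fin p → V →ᵃ[ℝ] ℝ)
    (hf : ∀ i, Continuous (f i)) :
    Nat.card (ConnectedComponents {z : V | ∀ i, f i z ≠ 0}) = (signVectors univ f).ncard := by
  set X := {z : V | ∀ i, f i z ≠ 0}
  have hcont : Continuous fun z : X ↦ signVector f z := by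
    refine continuous_pi fun i ↦ continuous_discrete_rng.2 fun b ↦ ?_
    have hfi : Continuous fun z : X ↦ f i z := (hf i).comp continuous_subtype_val
    cases b
    · convert isOpen_lt hfi (continuous_const (y := (0 : ℝ))) using 1
      ext z
      simpa [signVector] using (z.2 i).le_iff_lt
    · convert isOpen_lt (continuous_const (y := (0 : ℝ))) hfi using 1
      ext z
      simp [signVector]
  have hinj : Function.Injective hcont.connectedComponentsLift := by
    refine ConnectedComponents.surjective_coe.forall₂.2 fun x y hxy ↦ ?_
    simp only [Continuous.connectedComponentsLift_apply_coe] at hxy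
    have hcell : IsPreconnected (Subtype.val ⁻¹' signCell f (signVector f x) : Set X) := by
      rw [← Topology.IsInducing.subtypeVal.isPreconnected_image, Subtype.image_preimage_coe,
        inter_eq_right.2 (show signCell f (signVector f x) ⊆ X from
          fun z hz ↦ (mem_signCell_iff.1 hz).1)]
      exact (convex_signCell f _).isPreconnected
    have hmem : ∀ z : X, signVector f z = signVector f x →
        z ∈ Subtype.val ⁻¹' signCell f (signVector f x) := fun z hz ↦ mem_signCell_iff.2 ⟨z.2, hz⟩
    exact ConnectedComponents.coe_eq_coe'.2
      (hcell.subset_connectedComponent (hmem y hxy.symm) (hmem x rfl))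
  have hrange : range hcont.connectedComponentsLift = signVectors univ f := by
    rw [← ConnectedComponents.surjective_coe.range_comp, hcont.connectedComponentsLift_comp_coe]
    ext σ
    simp only [mem_range, Subtype.exists, exists_prop, signVectors, univ_inter, mem_ofPred_eq,
      Set.Nonempty, mem_signCell_iff, X]
  rw [← hrange, ← Nat.card_coe_set_eq, Nat.card_range_of_injective hinj]

end HyperplaneArrangement

open HyperplaneArrangement

theorem regions_lower_bound (p m : ℕ)
    (a : Fin p → Fin m → ℝ) (b : Fin p → ℝ) (ha : ∀ i, a i ≠ 0) :
    Set.ncard {T : Set (Fin m → ℝ) | T.Nonempty ∧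
        ∃ F : Finset (Fin p), T = ⋂ i ∈ F, {z : Fin m → ℝ | ∑ j, a i j * z j = b i}} ≤
      Nat.card (ConnectedComponents
        {z : Fin m → ℝ | ∀ i : Fin p, (∑ j, a i j * z j) ≠ b i}) := by
  set f : Fin p → (Fin m → ℝ) →ᵃ[ℝ] ℝ := fun i ↦
    (dotProductEquiv ℝ (Fin m) (a i)).toAffineMap - AffineMap.const ℝ _ (b i)
  have hflats : {T : Set (Fin m → ℝ) | T.Nonempty ∧
      ∃ F : Finset (Fin p), T = ⋂ i ∈ F, {z : Fin m → ℝ | ∑ j, a i j * z j = b i}} =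
      flats (⊤ : AffineSubspace ℝ (Fin m → ℝ)) f := by
    simp [flats, f, dotProduct, sub_eq_zero]
  have hregions : {z : Fin m → ℝ | ∀ i : Fin p, (∑ j, a i j * z j) ≠ b i} =
      {z | ∀ i, f i z ≠ 0} := by
    simp [f, dotProduct, sub_eq_zero]
  have hproper : ∀ i, ¬ univ ⊆ {z | f i z = 0} := by
    intro i h
    refine ha i (funext fun j ↦ ?_)
    have h0 := h (mem_univ 0)
    have h1 := h (mem_univ (Pi.single j 1))
    simp [f] at h0 h1 ⊢
    linarith
  have hcont : ∀ i, Continuous (f i) := fun i ↦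
    show Continuous fun z ↦ a i ⬝ᵥ z - b i by fun_prop
  rw [hflats, hregions, natCard_connectedComponents_eq_ncard_signVectors f hcont]
  exact ncard_flats_le_ncard_signVectors ⊤ f hproper
end

section
/- Let p ≥ m be positive integers and let H₁, …, H_p be affine hyperplanes in ℝ^m that all pass through a common point x₀ ∈ ℝ^m (a central arrangement). Then the number of regions of the arrangement, i.e., the number of connected components of ℝ^m \ (H₁ ∪ ⋯ ∪ H_p), is at most 2 · binom(p−1, ≤ m−1) = 2 · ∑_{i=0}^{m−1} binom(p−1, i). -/
open Finset

-- Pascal sum identity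
lemma pascal_sum (q e : ℕ) :
    ∑ i ∈ range (e+1), (q+1).choose i
      = ∑ i ∈ range (e+1), q.choose i + ∑ i ∈ range e, q.choose i := by
  rw [Finset.sum_range_succ' (fun i => (q+1).choose i) e]
  simp only [Nat.choose_succ_succ, Nat.choose_zero_right]
  rw [Finset.sum_add_distrib]
  rw [Finset.sum_range_succ' (fun i => q.choose i) e]
  simp [Nat.choose_zero_right]
  omega

lemma sum_choose_zero_eq_one (d : ℕ) (hd : 1 ≤ d) :
    ∑ i ∈ range d, Nat.choose 0 i = 1 := by
  rw [Finset.sum_eq_single_of_mem 0 (Finset.mem_range.2 hd)]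
  · simp
  · intro i _ hi
    exact Nat.choose_eq_zero_of_lt (Nat.pos_of_ne_zero hi)


open Finset

open scoped Classical in
noncomputable def realSet {m : ℕ} (p : ℕ) (f : Fin p → ((Fin m → ℝ) →ₗ[ℝ] ℝ))
    (W : Submodule ℝ (Fin m → ℝ)) : Finset (Fin p → Bool) :=
  Finset.univ.filter (fun s => ∃ z ∈ W, ∀ i, if s i then 0 < f i z else f i z < 0)

lemma mem_realSet {m : ℕ} {p : ℕ} {f : Fin p → ((Fin m → ℝ) →ₗ[ℝ] ℝ)}
    {W : Submodule ℝ (Fin m → ℝ)} {s : Fin p → Bool} :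
    s ∈ realSet p f W ↔ ∃ z ∈ W, ∀ i, if s i then 0 < f i z else f i z < 0 := by
  classical
  simp [realSet]

lemma finrank_inf_ker {m : ℕ} (W : Submodule ℝ (Fin m → ℝ)) (g : (Fin m → ℝ) →ₗ[ℝ] ℝ)
    (w : Fin m → ℝ) (hw : w ∈ W) (hgw : g w ≠ 0) :
    Module.finrank ℝ (W ⊓ LinearMap.ker g : Submodule ℝ (Fin m → ℝ)) + 1
      = Module.finrank ℝ W := by
  set h : W →ₗ[ℝ] ℝ := g.comp W.subtype with hh
  have hker : LinearMap.ker h = Submodule.comap W.subtype (W ⊓ LinearMap.ker g) := by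
    rw [hh, LinearMap.ker_comp, Submodule.comap_inf, Submodule.comap_subtype_self]
    simp
  have h1 : Module.finrank ℝ (LinearMap.ker h)
      = Module.finrank ℝ (W ⊓ LinearMap.ker g : Submodule ℝ (Fin m → ℝ)) := by
    rw [hker]
    exact (Submodule.comapSubtypeEquivOfLe inf_le_left).finrank_eq
  have hrange : LinearMap.range h = ⊤ := by
    rw [Submodule.eq_top_iff']
    intro y
    have h1mem : (1 : ℝ) ∈ LinearMap.range h := by
      refine ⟨(g w)⁻¹ • ⟨w, hw⟩, ?_⟩
      simp [hh, inv_mul_cancel₀ hgw]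
    simpa using (LinearMap.range h).smul_mem y h1mem
  have h2 := LinearMap.finrank_range_add_finrank_ker h
  rw [hrange] at h2
  simp only [finrank_top, Module.finrank_self] at h2
  omega

lemma split_mem {m p : ℕ} (f : Fin (p+1) → ((Fin m → ℝ) →ₗ[ℝ] ℝ))
    (W : Submodule ℝ (Fin m → ℝ)) (s' : Fin p → Bool) (zp zn : Fin m → ℝ)
    (hzp : zp ∈ W) (hzn : zn ∈ W)
    (hp : 0 < f (Fin.last p) zp) (hn : f (Fin.last p) zn < 0)
    (hsp : ∀ j : Fin p, if s' j then 0 < f j.castSucc zp else f j.castSucc zp < 0)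
    (hsn : ∀ j : Fin p, if s' j then 0 < f j.castSucc zn else f j.castSucc zn < 0) :
    s' ∈ realSet p (fun j => f j.castSucc) (W ⊓ LinearMap.ker (f (Fin.last p))) := by
  set α := f (Fin.last p) zp with hα
  set β := f (Fin.last p) zn with hβ
  have hαβ : 0 < α - β := by linarith
  set u : ℝ := -β / (α - β) with hu'
  set v : ℝ := α / (α - β) with hv'
  have hu : 0 < u := div_pos (by linarith) hαβ
  have hv : 0 < v := by positivity
  set z₀ : Fin m → ℝ := u • zp + v • zn with hz₀
  have happ : ∀ i : Fin (p+1), f i z₀ = u * f i zp + v * f i zn := by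
    intro i
    simp [hz₀, map_add, map_smul, smul_eq_mul]
  rw [mem_realSet]
  refine ⟨z₀, ⟨W.add_mem (W.smul_mem u hzp) (W.smul_mem v hzn), ?_⟩, ?_⟩
  · have : f (Fin.last p) z₀ = 0 := by
      rw [happ, ← hα, ← hβ, hu', hv']
      field_simp
      ring
    simpa [LinearMap.mem_ker] using this
  · intro j
    have h1 := hsp j
    have h2 := hsn j
    cases hj : s' j with
    | true =>
      simp only [hj, if_true] at h1 h2 ⊢
      rw [happ]
      exact add_pos (mul_pos hu h1) (mul_pos hv h2)
    | false =>
      simp only [hj] at h1 h2 ⊢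
      norm_num at h1 h2 ⊢
      rw [happ]
      linarith [mul_neg_of_pos_of_neg hu h1, mul_neg_of_pos_of_neg hv h2]

theorem cover_bound {m : ℕ} : ∀ (p d : ℕ) (f : Fin p → ((Fin m → ℝ) →ₗ[ℝ] ℝ))
    (W : Submodule ℝ (Fin m → ℝ)), 1 ≤ p → Module.finrank ℝ W ≤ d →
    (realSet p f W).card ≤ 2 * ∑ i ∈ range d, (p-1).choose i := by
  intro p
  induction p with
  | zero => intro d f W h; omega
  | succ p ih =>
    intro d f W _ hW
    -- case d = 0 : W = ⊥, no realizable patterns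
    rcases Nat.eq_zero_or_pos d with rfl | hd
    · have hW0 : W = ⊥ := Submodule.finrank_eq_zero.1 (by omega)
      have : realSet (p+1) f W = ∅ := by
        ext s
        simp only [Finset.notMem_empty, iff_false, mem_realSet]
        rintro ⟨z, hz, hs⟩
        rw [hW0, Submodule.mem_bot] at hz
        subst hz
        have := hs 0
        cases h0 : s 0 <;> simp [h0] at this
      simp [this]
    obtain ⟨e, rfl⟩ : ∃ e, d = e + 1 := ⟨d - 1, by omega⟩
    rcases Nat.eq_zero_or_pos p with rfl | hp
    · -- base case p + 1 = 1
      have h2 : (realSet 1 f W).card ≤ 2 := by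
        calc (realSet 1 f W).card ≤ Fintype.card (Fin 1 → Bool) := Finset.card_le_univ _
          _ = 2 := by simp
      simpa [sum_choose_zero_eq_one (e+1) (by omega)] using h2
    obtain ⟨q, rfl⟩ : ∃ q, p = q + 1 := ⟨p - 1, by omega⟩
    -- main inductive step; p = q+1, arrangement has q+2 forms
    set lst := Fin.last (q+1) with hlst
    by_cases hC : ∀ z ∈ W, f lst z = 0
    · have : realSet (q+2) f W = ∅ := by
        ext s
        simp only [Finset.notMem_empty, iff_false, mem_realSet]
        rintro ⟨z, hz, hs⟩
        have h0 := hs lst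
        rw [hC z hz] at h0
        cases h0' : s lst <;> simp [h0'] at h0
      simp [this]
    push_neg at hC
    obtain ⟨w, hwW, hww⟩ := hC
    set W' := W ⊓ LinearMap.ker (f lst) with hW'
    have hrk : Module.finrank ℝ W' + 1 = Module.finrank ℝ W :=
      finrank_inf_ker W (f lst) w hwW hww
    set f' : Fin (q+1) → ((Fin m → ℝ) →ₗ[ℝ] ℝ) := fun j => f j.castSucc with hf'
    set π : (Fin (q+2) → Bool) → (Fin (q+1) → Bool) := fun s => s ∘ Fin.castSucc with hπ
    set R := realSet (q+2) f W with hR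
    set R' := realSet (q+1) f' W with hR'
    set D := realSet (q+1) f' W' with hD
    classical
    -- image of π on R is inside R'
    have himg : R.image π ⊆ R' := by
      intro s' hs'
      obtain ⟨s, hs, rfl⟩ := Finset.mem_image.1 hs'
      rw [mem_realSet] at hs ⊢
      obtain ⟨z, hz, hforall⟩ := hs
      exact ⟨z, hz, fun j => hforall j.castSucc⟩
    -- fiberwise count
    have hfib : ∀ s' ∈ R.image π, (R.filter (fun s => π s = s')).card
        ≤ if s' ∈ D then 2 else 1 := by
      intro s' _
      have hsub : (R.filter (fun s => π s = s'))
          ⊆ {Fin.snoc s' true, Fin.snoc s' false} := by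
        intro s hs
        obtain ⟨hsR, hπs⟩ := Finset.mem_filter.1 hs
        have hsnoc : s = Fin.snoc s' (s lst) := by
          funext i
          induction i using Fin.lastCases with
          | last => simp [hlst]
          | cast j =>
              rw [Fin.snoc_castSucc]
              exact congrFun hπs j
        cases hlast : s lst
        · rw [hsnoc, hlast]; exact Finset.mem_insert_of_mem (Finset.mem_singleton_self _)
        · rw [hsnoc, hlast]; exact Finset.mem_insert_self _ _
      by_cases hcard : (R.filter (fun s => π s = s')).card ≤ 1
      · exact le_trans hcard (by split <;> omega)
      -- at least two elements: both snoc extensions are in R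
      have h2 : (R.filter (fun s => π s = s')).card = 2 := by
        have := Finset.card_le_card hsub
        have hle2 : ({Fin.snoc s' true, Fin.snoc s' false} :
            Finset (Fin (q+2) → Bool)).card ≤ 2 := Finset.card_insert_le _ _ |>.trans (by simp)
        omega
      have heq : (R.filter (fun s => π s = s'))
          = {Fin.snoc s' true, Fin.snoc s' false} := by
        apply Finset.eq_of_subset_of_card_le hsub
        rw [h2]
        exact Finset.card_insert_le _ _ |>.trans (by simp)
      have htrue : Fin.snoc s' true ∈ R := by
        have : Fin.snoc s' true ∈ (R.filter (fun s => π s = s')) := by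
          rw [heq]; exact Finset.mem_insert_self _ _
        exact (Finset.mem_filter.1 this).1
      have hfalse : Fin.snoc s' false ∈ R := by
        have : Fin.snoc s' false ∈ (R.filter (fun s => π s = s')) := by
          rw [heq]; exact Finset.mem_insert_of_mem (Finset.mem_singleton_self _)
        exact (Finset.mem_filter.1 this).1
      rw [mem_realSet] at htrue hfalse
      obtain ⟨zp, hzp, hfp⟩ := htrue
      obtain ⟨zn, hzn, hfn⟩ := hfalse
      have hsD : s' ∈ D := by
        refine split_mem f W s' zp zn hzp hzn ?_ ?_ ?_ ?_
        · have := hfp lst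
          simpa [hlst, Fin.snoc_last] using this
        · have := hfn lst
          simpa [hlst, Fin.snoc_last] using this
        · intro j
          have := hfp j.castSucc
          simpa [Fin.snoc_castSucc] using this
        · intro j
          have := hfn j.castSucc
          simpa [Fin.snoc_castSucc] using this
      rw [if_pos hsD, h2]
    have hcount : R.card ≤ R'.card + D.card := by
      rw [Finset.card_eq_sum_card_fiberwise
        (fun x hx => Finset.mem_image_of_mem π hx : ∀ x ∈ R, π x ∈ R.image π)]
      calc ∑ s' ∈ R.image π, (R.filter (fun s => π s = s')).card
          ≤ ∑ s' ∈ R.image π, (if s' ∈ D then 2 else 1) := Finset.sum_le_sum hfib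
        _ = ∑ s' ∈ R.image π, (1 + if s' ∈ D then 1 else 0) := by
            apply Finset.sum_congr rfl; intro s' _; split <;> simp
        _ = (R.image π).card + ∑ s' ∈ R.image π, (if s' ∈ D then 1 else 0) := by
            rw [Finset.sum_add_distrib]; simp
        _ ≤ R'.card + D.card := by
            have hA : (R.image π).card ≤ R'.card := Finset.card_le_card himg
            have hB : (∑ s' ∈ R.image π, if s' ∈ D then 1 else 0) ≤ D.card := by
              have hcf : ((R.image π).filter (fun s' => s' ∈ D)).card
                  = ∑ s' ∈ R.image π, if s' ∈ D then 1 else 0 := Finset.card_filter _ _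
              rw [← hcf]
              exact Finset.card_le_card (fun x hx => (Finset.mem_filter.1 hx).2)
            exact Nat.add_le_add hA hB
    have hIH1 : R'.card ≤ 2 * ∑ i ∈ range (e+1), q.choose i := by
      have := ih (e+1) f' W (by omega) hW
      simpa using this
    have hIH2 : D.card ≤ 2 * ∑ i ∈ range e, q.choose i := by
      rcases Nat.eq_zero_or_pos e with rfl | he
      · -- finrank W' ≤ 0
        have := ih 0 f' W' (by omega) (by omega)
        simpa using this
      · have := ih e f' W' (by omega) (by omega)
        simpa using this
    calc R.card ≤ R'.card + D.card := hcount
      _ ≤ 2 * ∑ i ∈ range (e+1), q.choose i + 2 * ∑ i ∈ range e, q.choose i := by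
          exact Nat.add_le_add hIH1 hIH2
      _ = 2 * (∑ i ∈ range (e+1), q.choose i + ∑ i ∈ range e, q.choose i) := by ring
      _ = 2 * ∑ i ∈ range (e+1), (q+1).choose i := by rw [pascal_sum]
      _ = 2 * ∑ i ∈ range (e+1), (q+2-1).choose i := by norm_num


open Finset

section Aux

noncomputable def formOf {m : ℕ} (c : Fin m → ℝ) : (Fin m → ℝ) →ₗ[ℝ] ℝ where
  toFun z := ∑ j, c j * z j
  map_add' z w := by simp [mul_add, Finset.sum_add_distrib]
  map_smul' r z := by
    simp only [Pi.smul_apply, smul_eq_mul, RingHom.id_apply, Finset.mul_sum]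
    exact Finset.sum_congr rfl fun j _ => by ring

end Aux

theorem central_regions_upper_bound (p m : ℕ) (hm : 1 ≤ m) (hpm : m ≤ p)
    (a : Fin p → Fin m → ℝ) (b : Fin p → ℝ) (ha : ∀ i, a i ≠ 0)
    (x₀ : Fin m → ℝ) (hx₀ : ∀ i : Fin p, ∑ j, a i j * x₀ j = b i) :
    Nat.card (ConnectedComponents
        {z : Fin m → ℝ | ∀ i : Fin p, (∑ j, a i j * z j) ≠ b i}) ≤
      2 * ∑ i ∈ Finset.range m, (p - 1).choose i := by
  classical
  set X : Set (Fin m → ℝ) := {z : Fin m → ℝ | ∀ i : Fin p, (∑ j, a i j * z j) ≠ b i} with hX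
  have hScont : ∀ i : Fin p, Continuous (fun z : Fin m → ℝ => ∑ j, a i j * z j) := fun i =>
    continuous_finset_sum _ fun j _ => continuous_const.mul (continuous_apply j)
  set g : X → (Fin p → Bool) := fun z i => decide (b i < ∑ j, a i j * z.1 j) with hg
  have hgc : Continuous g := by
    apply continuous_pi
    intro i
    rw [continuous_discrete_rng]
    intro c
    cases c
    · have hpre : (fun z : X => g z i) ⁻¹' {false}
          = Subtype.val ⁻¹' {z : Fin m → ℝ | ∑ j, a i j * z j < b i} := by
        ext z
        simp only [hg, Set.mem_preimage, Set.mem_singleton_iff, decide_eq_false_iff_not,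
          Set.mem_setOf_eq]
        constructor
        · intro h; exact lt_of_le_of_ne (le_of_not_gt h) (z.2 i)
        · intro h; exact not_lt.2 h.le
      rw [hpre]
      exact (isOpen_lt (hScont i) continuous_const).preimage continuous_subtype_val
    · have hpre : (fun z : X => g z i) ⁻¹' {true}
          = Subtype.val ⁻¹' {z : Fin m → ℝ | b i < ∑ j, a i j * z j} := by
        ext z
        simp [hg, decide_eq_true_eq]
      rw [hpre]
      exact (isOpen_lt continuous_const (hScont i)).preimage continuous_subtype_val
  set L : Fin p → ((Fin m → ℝ) →ₗ[ℝ] ℝ) := fun i => formOf (a i) with hL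
  have hLapp : ∀ (i : Fin p) (z : Fin m → ℝ), L i z = ∑ j, a i j * z j := fun _ _ => rfl
  have hmem : ∀ x : X, g x ∈ realSet p L ⊤ := by
    intro x
    rw [mem_realSet]
    refine ⟨x.1 - x₀, Submodule.mem_top, ?_⟩
    intro i
    have hL2 : L i (x.1 - x₀) = (∑ j, a i j * x.1 j) - b i := by
      rw [map_sub, hLapp, hLapp, hx₀ i]
    cases hgi : g x i
    · have hlt : ¬ (b i < ∑ j, a i j * x.1 j) := of_decide_eq_false hgi
      have hne := x.2 i
      have hlt2 : (∑ j, a i j * x.1 j) < b i := lt_of_le_of_ne (le_of_not_gt hlt) hne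
      simp only [Bool.false_eq_true, if_false]
      rw [hL2]; linarith
    · have hlt : b i < ∑ j, a i j * x.1 j := of_decide_eq_true hgi
      simp only [if_true]
      rw [hL2]; linarith
  have hinj : Function.Injective hgc.connectedComponentsLift := by
    intro c₁ c₂ hcc
    obtain ⟨x, rfl⟩ := ConnectedComponents.surjective_coe c₁
    obtain ⟨y, rfl⟩ := ConnectedComponents.surjective_coe c₂
    rw [hgc.connectedComponentsLift_apply_coe, hgc.connectedComponentsLift_apply_coe] at hcc
    set Cs : Set (Fin m → ℝ) := ⋂ i : Fin p,
      (if g x i = true then {z : Fin m → ℝ | b i < ∑ j, a i j * z j}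
        else {z : Fin m → ℝ | ∑ j, a i j * z j < b i}) with hCs
    have hlin : ∀ i : Fin p, IsLinearMap ℝ (fun z : Fin m → ℝ => ∑ j, a i j * z j) :=
      fun i => (formOf (a i)).isLinear
    have hconv : Convex ℝ Cs := by
      apply convex_iInter
      intro i
      split_ifs
      · exact convex_halfSpace_gt (hlin i) (b i)
      · exact convex_halfSpace_lt (hlin i) (b i)
    have hCX : Cs ⊆ X := by
      intro z hz i
      have hzi := Set.mem_iInter.1 hz i
      by_cases h : g x i = true
      · rw [if_pos h] at hzi; exact (ne_of_lt hzi).symm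
      · rw [if_neg h] at hzi; exact ne_of_lt hzi
    have hxC : x.1 ∈ Cs := by
      apply Set.mem_iInter.2
      intro i
      by_cases h : g x i = true
      · rw [if_pos h]; exact of_decide_eq_true h
      · rw [if_neg h]
        have hgi : g x i = false := by revert h; cases g x i <;> simp
        have hlt : ¬ (b i < ∑ j, a i j * x.1 j) := of_decide_eq_false hgi
        exact lt_of_le_of_ne (le_of_not_gt hlt) (x.2 i)
    have hyC : y.1 ∈ Cs := by
      apply Set.mem_iInter.2
      intro i
      have hgy : g y i = g x i := congrFun hcc.symm i
      by_cases h : g x i = true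
      · rw [if_pos h]; exact of_decide_eq_true (hgy.trans h)
      · rw [if_neg h]
        have hgi : g x i = false := by revert h; cases g x i <;> simp
        have hlt : ¬ (b i < ∑ j, a i j * y.1 j) := of_decide_eq_false (hgy.trans hgi)
        exact lt_of_le_of_ne (le_of_not_gt hlt) (y.2 i)
    have himg : (Subtype.val '' (Subtype.val ⁻¹' Cs : Set X)) = Cs := by
      rw [Subtype.image_preimage_coe]
      exact Set.inter_eq_right.mpr hCX
    have hT : IsPreconnected (Subtype.val ⁻¹' Cs : Set X) := by
      apply Topology.IsInducing.subtypeVal.isPreconnected_image.1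
      rw [himg]
      exact hconv.isPreconnected
    have hxy : (x : X) ∈ connectedComponent (y : X) :=
      hT.subset_connectedComponent (Set.mem_preimage.2 hyC) (Set.mem_preimage.2 hxC)
    exact ConnectedComponents.coe_eq_coe'.2 hxy
  set F : ConnectedComponents X → {s : Fin p → Bool // s ∈ realSet p L ⊤} := fun c =>
    ⟨hgc.connectedComponentsLift c, by
      obtain ⟨x, rfl⟩ := ConnectedComponents.surjective_coe c
      rw [hgc.connectedComponentsLift_apply_coe]
      exact hmem x⟩ with hF
  have hFinj : Function.Injective F := by
    intro c₁ c₂ h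
    exact hinj (congrArg Subtype.val h)
  calc Nat.card (ConnectedComponents X)
      ≤ Nat.card {s : Fin p → Bool // s ∈ realSet p L ⊤} :=
        Nat.card_le_card_of_injective F hFinj
    _ = (realSet p L ⊤).card := by rw [Nat.card_eq_fintype_card, Fintype.card_coe]
    _ ≤ 2 * ∑ i ∈ Finset.range m, (p - 1).choose i := by
        apply cover_bound p m L ⊤ (by omega)
        rw [finrank_top, Module.finrank_pi]
        simp
end

section
/- For any positive integers n and d with 1 ≤ d ≤ n, the number T(n,d) of Boolean polynomial threshold functions of degree d in n variables satisfies T(n,d) ≤ 2 · binom(2^n − 1, ≤ m−1), where m = binom(n, ≤ d). -/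
open Finset

/-- Cover's counting function: `2 * ∑_{i<k} C(N-1, i)`. -/
def coverFn (N k : ℕ) : ℕ := 2 * ∑ i ∈ Finset.range k, (N - 1).choose i

lemma coverFn_mono (N : ℕ) {k l : ℕ} (h : k ≤ l) : coverFn N k ≤ coverFn N l := by
  unfold coverFn
  exact Nat.mul_le_mul_left 2 (Finset.sum_le_sum_of_subset (Finset.range_subset_range.2 h))

lemma coverFn_succ (M k : ℕ) :
    coverFn (M + 2) k = coverFn (M + 1) k + coverFn (M + 1) (k - 1) := by
  cases k with
  | zero => simp [coverFn]
  | succ j =>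
    unfold coverFn
    simp only [Nat.add_sub_cancel, Nat.succ_sub_one]
    rw [← Nat.mul_add]
    congr 1
    rw [Finset.sum_range_succ' (fun i => (M+1).choose i) j,
        Finset.sum_range_succ' (fun i => M.choose i) j]
    simp only [Nat.choose_succ_succ, Nat.choose_zero_right]
    rw [Finset.sum_add_distrib]
    ring

/-- The set of sign patterns realized by nowhere-zero vectors of `V`. -/
def patSet {X : Type*} (V : Submodule ℝ (X → ℝ)) : Set (X → ℝ) :=
  {s | ∃ v ∈ V, (∀ x, v x ≠ 0) ∧ s = fun x => Real.sign (v x)}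

open scoped Classical in
lemma patSet_finite {X : Type*} [Fintype X] (V : Submodule ℝ (X → ℝ)) :
    (patSet V).Finite := by
  apply Set.Finite.subset
    (Set.finite_range (fun b : X → Bool => fun x => if b x then (1 : ℝ) else -1))
  rintro s ⟨v, -, hnz, rfl⟩
  refine ⟨fun x => if 0 < v x then true else false, ?_⟩
  funext x
  rcases (hnz x).lt_or_gt with h | h
  · simp [not_lt.2 h.le, Real.sign_of_neg h]
  · simp [h, Real.sign_of_pos h]

lemma patSet_sign_values {X : Type*} {V : Submodule ℝ (X → ℝ)} {s : X → ℝ}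
    (hs : s ∈ patSet V) (x : X) : s x = 1 ∨ s x = -1 := by
  obtain ⟨v, -, hnz, rfl⟩ := hs
  rcases (hnz x).lt_or_gt with h | h
  · right; exact Real.sign_of_neg h
  · left; exact Real.sign_of_pos h

lemma sign_combo {a b c d : ℝ} (ha : a ≠ 0) (hb : b ≠ 0)
    (hs : Real.sign a = Real.sign b) (hc : 0 < c) (hd : 0 < d) :
    c * a + d * b ≠ 0 ∧ Real.sign (c * a + d * b) = Real.sign a := by
  rcases ha.lt_or_gt with h | h
  · have hb' : b < 0 := by
      rcases hb.lt_or_gt with h' | h'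
      · exact h'
      · rw [Real.sign_of_neg h, Real.sign_of_pos h'] at hs; norm_num at hs
    have hlt : c * a + d * b < 0 := by nlinarith
    exact ⟨ne_of_lt hlt, by rw [Real.sign_of_neg hlt, Real.sign_of_neg h]⟩
  · have hb' : 0 < b := by
      rcases hb.lt_or_gt with h' | h'
      · rw [Real.sign_of_pos h, Real.sign_of_neg h'] at hs; norm_num at hs
      · exact h'
    have hlt : 0 < c * a + d * b := by nlinarith
    exact ⟨(ne_of_lt hlt).symm, by rw [Real.sign_of_pos hlt, Real.sign_of_pos h]⟩

lemma restrict_mem {N : ℕ} {V : Submodule ℝ (Fin (N + 1) → ℝ)} {s : Fin (N + 1) → ℝ}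
    (hs : s ∈ patSet V) :
    s ∘ Fin.castSucc ∈ patSet (V.map (LinearMap.funLeft ℝ ℝ Fin.castSucc)) := by
  obtain ⟨v, hv, hnz, rfl⟩ := hs
  exact ⟨v ∘ Fin.castSucc, ⟨v, hv, rfl⟩, fun j => hnz _, rfl⟩

lemma both_signs {N : ℕ} {V : Submodule ℝ (Fin (N + 1) → ℝ)} {s t : Fin (N + 1) → ℝ}
    (hs : s ∈ patSet V) (ht : t ∈ patSet V)
    (hres : s ∘ Fin.castSucc = t ∘ Fin.castSucc)
    (hslast : s (Fin.last N) = 1) (htlast : t (Fin.last N) = -1) :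
    s ∘ Fin.castSucc ∈ patSet
      ((V ⊓ LinearMap.ker (LinearMap.proj (R := ℝ) (φ := fun _ : Fin (N+1) => ℝ) (Fin.last N))).map
        (LinearMap.funLeft ℝ ℝ Fin.castSucc)) := by
  obtain ⟨v, hvV, hvnz, rfl⟩ := hs
  obtain ⟨w, hwV, hwnz, rfl⟩ := ht
  simp only at hslast htlast
  have hvpos : 0 < v (Fin.last N) := by
    rcases (hvnz (Fin.last N)).lt_or_gt with h | h
    · rw [Real.sign_of_neg h] at hslast; norm_num at hslast
    · exact h
  have hwneg : w (Fin.last N) < 0 := by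
    rcases (hwnz (Fin.last N)).lt_or_gt with h | h
    · exact h
    · rw [Real.sign_of_pos h] at htlast; norm_num at htlast
  set u : Fin (N + 1) → ℝ := (-(w (Fin.last N))) • v + (v (Fin.last N)) • w with hu
  have huV : u ∈ V := V.add_mem (V.smul_mem _ hvV) (V.smul_mem _ hwV)
  have hulast : u (Fin.last N) = 0 := by simp [hu]; ring
  have hcombo : ∀ j : Fin N, u j.castSucc ≠ 0 ∧
      Real.sign (u j.castSucc) = Real.sign (v j.castSucc) := by
    intro j
    have hst : Real.sign (v j.castSucc) = Real.sign (w j.castSucc) := congrFun hres j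
    have := sign_combo (hvnz j.castSucc) (hwnz j.castSucc) hst (neg_pos.2 hwneg) hvpos
    simpa [hu] using this
  refine ⟨u ∘ Fin.castSucc, ⟨u, ⟨huV, ?_⟩, rfl⟩, fun j => (hcombo j).1, ?_⟩
  · simpa [LinearMap.mem_ker] using hulast
  · funext j
    exact ((hcombo j).2).symm

lemma card_le_of_split {α β : Type*} (A : Set α) (B C : Set β) (hB : B.Finite) (hC : C.Finite)
    (res : α → β) (lst : α → ℝ)
    (hval : ∀ s ∈ A, lst s = 1 ∨ lst s = -1)
    (hres : ∀ s ∈ A, res s ∈ B)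
    (hext : ∀ s ∈ A, ∀ t ∈ A, res s = res t → lst s = lst t → s = t)
    (hkey : ∀ s ∈ A, ∀ t ∈ A, res s = res t → lst s = 1 → lst t = -1 → res s ∈ C) :
    Nat.card A ≤ Nat.card B + Nat.card C := by
  classical
  haveI := hB.to_subtype
  haveI := hC.to_subtype
  rw [← Nat.card_sum]
  apply Nat.card_le_card_of_injective
    (f := fun s : A => if lst s.1 = -1 then Sum.inl (⟨res s.1, hres s.1 s.2⟩ : B)
      else if h : res s.1 ∈ C then Sum.inr ⟨res s.1, h⟩
      else Sum.inl ⟨res s.1, hres s.1 s.2⟩)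
  rintro ⟨s, hs⟩ ⟨t, ht⟩ hFeq
  simp only at hFeq
  apply Subtype.ext
  by_cases hs1 : lst s = -1 <;> by_cases ht1 : lst t = -1
  · simp only [hs1, ht1, if_true] at hFeq
    exact hext s hs t ht (congrArg Subtype.val (Sum.inl.inj hFeq)) (hs1.trans ht1.symm)
  · have ht1' : lst t = 1 := (hval t ht).resolve_right ht1
    simp only [hs1, ht1, if_true, if_false] at hFeq
    by_cases ht2 : res t ∈ C
    · simp [ht2] at hFeq
    · simp only [ht2, dif_neg, not_false_iff] at hFeq
      have hr : res s = res t := congrArg Subtype.val (Sum.inl.inj hFeq)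
      exact absurd (hkey t ht s hs hr.symm ht1' hs1) ht2
  · have hs1' : lst s = 1 := (hval s hs).resolve_right hs1
    simp only [hs1, ht1, if_true, if_false] at hFeq
    by_cases hs2 : res s ∈ C
    · simp [hs2] at hFeq
    · simp only [hs2, dif_neg, not_false_iff] at hFeq
      have hr : res s = res t := congrArg Subtype.val (Sum.inl.inj hFeq)
      exact absurd (hkey s hs t ht hr hs1' ht1) hs2
  · have hs1' : lst s = 1 := (hval s hs).resolve_right hs1
    have ht1' : lst t = 1 := (hval t ht).resolve_right ht1
    simp only [hs1, ht1, if_false] at hFeq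
    by_cases hs2 : res s ∈ C <;> by_cases ht2 : res t ∈ C
    · simp only [hs2, ht2, dif_pos] at hFeq
      exact hext s hs t ht (congrArg Subtype.val (Sum.inr.inj hFeq)) (hs1'.trans ht1'.symm)
    · simp [hs2, ht2] at hFeq
    · simp [hs2, ht2] at hFeq
    · simp only [hs2, ht2, dif_neg, not_false_iff] at hFeq
      exact hext s hs t ht (congrArg Subtype.val (Sum.inl.inj hFeq)) (hs1'.trans ht1'.symm)

lemma pat_card_fin : ∀ (N : ℕ) (V : Submodule ℝ (Fin (N + 1) → ℝ)),
    (patSet V).ncard ≤ coverFn (N + 1) (Module.finrank ℝ ↥V) := by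
  intro N
  induction N with
  | zero =>
    intro V
    by_cases h0 : Module.finrank ℝ ↥V = 0
    · have hV : V = ⊥ := Submodule.finrank_eq_zero.mp h0
      have he : patSet V = ∅ := by
        ext s
        simp only [patSet, Set.mem_setOf_eq, Set.mem_empty_iff_false, iff_false, not_exists]
        rintro v ⟨hv, hnz, -⟩
        rw [hV, Submodule.mem_bot] at hv
        exact hnz 0 (by rw [hv]; rfl)
      rw [he, h0]
      simp
    · have hsub : patSet V ⊆ {(fun _ => (1:ℝ)), (fun _ => (-1:ℝ))} := by
        rintro s ⟨v, -, hnz, rfl⟩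
        rcases (hnz 0).lt_or_gt with h | h
        · right
          have : (fun i : Fin (0 + 1) => Real.sign (v i)) = fun _ => (-1 : ℝ) := by
            funext i; rw [Fin.eq_zero i]; exact Real.sign_of_neg h
          simpa using this
        · left
          have : (fun i : Fin (0 + 1) => Real.sign (v i)) = fun _ => (1 : ℝ) := by
            funext i; rw [Fin.eq_zero i]; exact Real.sign_of_pos h
          simpa using this
      have h1 : 1 ≤ Module.finrank ℝ ↥V := Nat.one_le_iff_ne_zero.2 h0
      calc (patSet V).ncard
          ≤ ({(fun _ => (1:ℝ)), (fun _ => (-1:ℝ))} : Set (Fin (0 + 1) → ℝ)).ncard :=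
            Set.ncard_le_ncard hsub ((Set.finite_singleton _).insert _)
        _ ≤ 2 := by
            refine le_trans (Set.ncard_insert_le _ _) ?_
            simp [Set.ncard_singleton]
        _ ≤ coverFn 1 (Module.finrank ℝ ↥V) := by
            calc 2 = coverFn 1 1 := by simp [coverFn]
              _ ≤ coverFn 1 _ := coverFn_mono 1 h1
  | succ M IH =>
    intro V
    by_cases hzero : ∀ v ∈ V, v (Fin.last (M + 1)) = 0
    · have he : patSet V = ∅ := by
        ext s
        simp only [patSet, Set.mem_setOf_eq, Set.mem_empty_iff_false, iff_false, not_exists]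
        rintro v ⟨hv, hnz, -⟩
        exact hnz _ (hzero v hv)
      rw [he]
      simp
    · push_neg at hzero
      obtain ⟨v0, hv0V, hv0⟩ := hzero
      have hcount : Nat.card ↥(patSet V) ≤
          Nat.card ↥(patSet (V.map (LinearMap.funLeft ℝ ℝ Fin.castSucc))) +
          Nat.card ↥(patSet ((V ⊓ LinearMap.ker (LinearMap.proj (R := ℝ)
            (φ := fun _ : Fin (M + 2) => ℝ) (Fin.last (M + 1)))).map
            (LinearMap.funLeft ℝ ℝ Fin.castSucc))) := by
        apply card_le_of_split (patSet V) _ _ (patSet_finite _) (patSet_finite _)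
          (fun s => s ∘ Fin.castSucc) (fun s => s (Fin.last (M + 1)))
        · intro s hs
          exact patSet_sign_values hs _
        · intro s hs
          exact restrict_mem hs
        · intro s hs t ht hr hl
          funext i
          induction i using Fin.lastCases with
          | last => exact hl
          | cast j => exact congrFun hr j
        · intro s hs t ht hr h1 h2
          exact both_signs hs ht hr h1 h2
      set ψ : (Fin (M + 2) → ℝ) →ₗ[ℝ] ℝ :=
        LinearMap.proj (R := ℝ) (φ := fun _ : Fin (M + 2) => ℝ) (Fin.last (M + 1)) with hψdef
      have hsurj : Function.Surjective (ψ.comp V.subtype) := by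
        intro r
        refine ⟨(r / (v0 (Fin.last (M + 1)))) • ⟨v0, hv0V⟩, ?_⟩
        simp [hψdef, div_mul_cancel₀ _ hv0]
      have hrange : Module.finrank ℝ ↥(LinearMap.range (ψ.comp V.subtype)) = 1 := by
        rw [LinearMap.range_eq_top.mpr hsurj]
        simpa using Module.finrank_self ℝ
      have hrn := LinearMap.finrank_range_add_finrank_ker (ψ.comp V.subtype)
      rw [hrange] at hrn
      have hkerW : V ⊓ LinearMap.ker ψ =
          Submodule.map V.subtype (LinearMap.ker (ψ.comp V.subtype)) := by
        rw [LinearMap.ker_comp, Submodule.map_comap_subtype]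
      have hWrank : Module.finrank ℝ ↥(V ⊓ LinearMap.ker ψ) ≤ Module.finrank ℝ ↥V - 1 := by
        rw [hkerW]
        refine le_trans (Submodule.finrank_map_le _ _) ?_
        omega
      have hBrank : Module.finrank ℝ ↥(V.map (LinearMap.funLeft ℝ ℝ Fin.castSucc)) ≤
          Module.finrank ℝ ↥V := Submodule.finrank_map_le _ _
      have hCrank : Module.finrank ℝ ↥((V ⊓ LinearMap.ker ψ).map
          (LinearMap.funLeft ℝ ℝ Fin.castSucc)) ≤ Module.finrank ℝ ↥V - 1 :=
        le_trans (Submodule.finrank_map_le _ _) hWrank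
      rw [← Nat.card_coe_set_eq]
      calc Nat.card ↥(patSet V)
          ≤ _ + _ := hcount
        _ ≤ coverFn (M + 1) (Module.finrank ℝ ↥V) +
            coverFn (M + 1) (Module.finrank ℝ ↥V - 1) := by
            gcongr
            · rw [Nat.card_coe_set_eq]
              exact le_trans (IH _) (coverFn_mono _ hBrank)
            · rw [Nat.card_coe_set_eq]
              exact le_trans (IH _) (coverFn_mono _ hCrank)
        _ = coverFn (M + 2) (Module.finrank ℝ ↥V) := (coverFn_succ _ _).symm


lemma pat_card_general {X : Type} [Fintype X] (hX : 1 ≤ Fintype.card X)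
    (V : Submodule ℝ (X → ℝ)) :
    Nat.card ↥(patSet V) ≤ coverFn (Fintype.card X) (Module.finrank ℝ ↥V) := by
  obtain ⟨M, hM⟩ : ∃ M, Fintype.card X = M + 1 := ⟨Fintype.card X - 1, by omega⟩
  let e : Fin (M + 1) ≃ X := (Fintype.equivFinOfCardEq hM).symm
  let E : (X → ℝ) ≃ₗ[ℝ] (Fin (M + 1) → ℝ) := LinearEquiv.funCongrLeft ℝ ℝ e
  have hEapp : ∀ (g : X → ℝ) (j : Fin (M + 1)), E g j = g (e j) := fun g j => rfl
  have himg : patSet (V.map (E : (X → ℝ) →ₗ[ℝ] (Fin (M + 1) → ℝ))) = ⇑E '' patSet V := by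
    ext s'
    constructor
    · rintro ⟨v', ⟨v, hv, rfl⟩, hnz, rfl⟩
      refine ⟨fun x => Real.sign (v x), ⟨v, hv, fun x => ?_, rfl⟩, ?_⟩
      · have h' : v (e (e.symm x)) ≠ 0 := hnz (e.symm x)
        rwa [Equiv.apply_symm_apply] at h'
      · rfl
    · rintro ⟨s, ⟨v, hv, hnz, rfl⟩, rfl⟩
      refine ⟨(E : (X → ℝ) →ₗ[ℝ] (Fin (M + 1) → ℝ)) v, ⟨v, hv, rfl⟩, fun j => hnz (e j), rfl⟩
  have h1 : (patSet V).ncard = (patSet (V.map (E : (X → ℝ) →ₗ[ℝ] (Fin (M + 1) → ℝ)))).ncard := by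
    rw [himg, Set.ncard_image_of_injective _ E.injective]
  rw [Nat.card_coe_set_eq, h1, hM]
  refine le_trans (pat_card_fin M _) ?_
  rw [LinearEquiv.finrank_map_eq]

/-- Evaluation of polynomials at the points of the Boolean cube, as a linear map. -/
noncomputable def evalCube (n : ℕ) : MvPolynomial (Fin n) ℝ →ₗ[ℝ] ((Fin n → Bool) → ℝ) :=
  LinearMap.pi fun σ => (MvPolynomial.aeval fun i => if σ i then (1 : ℝ) else -1).toLinearMap

/-- The multilinear character attached to a subset of coordinates. -/
def chi (n : ℕ) (S : Finset (Fin n)) : (Fin n → Bool) → ℝ :=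
  fun σ => ∏ i ∈ S, (if σ i then (1 : ℝ) else -1)

open scoped Classical in
noncomputable def chiSet (n d : ℕ) : Finset ((Fin n → Bool) → ℝ) :=
  ((Finset.range (d + 1)).biUnion fun i =>
    (Finset.univ : Finset (Fin n)).powersetCard i).image (chi n)

lemma chiSet_card (n d : ℕ) :
    (chiSet n d).card ≤ ∑ i ∈ Finset.range (d + 1), n.choose i := by
  classical
  refine le_trans Finset.card_image_le ?_
  refine le_trans Finset.card_biUnion_le ?_
  apply Finset.sum_le_sum
  intro i _
  rw [Finset.card_powersetCard, Finset.card_univ, Fintype.card_fin]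

lemma evalCube_mem_span {n d : ℕ} {p : MvPolynomial (Fin n) ℝ} (hp : p.totalDegree ≤ d) :
    evalCube n p ∈ Submodule.span ℝ (chiSet n d : Set ((Fin n → Bool) → ℝ)) := by
  classical
  have hrepr : evalCube n p = ∑ α ∈ p.support,
      MvPolynomial.coeff α p • chi n (α.support.filter fun i => Odd (α i)) := by
    funext σ
    have h0 : evalCube n p σ = MvPolynomial.eval (fun i => if σ i then (1:ℝ) else -1) p := rfl
    rw [h0, MvPolynomial.eval_eq, Finset.sum_apply]
    apply Finset.sum_congr rfl
    intro α _
    have hmon : ∀ i ∈ α.support, ((if σ i then (1:ℝ) else -1) ^ α i)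
        = (if Odd (α i) then (if σ i then (1:ℝ) else -1) else 1) := by
      intro i _
      by_cases hb : σ i
      · simp [hb]
      · have hbv : (if σ i then (1:ℝ) else -1) = -1 := by simp [hb]
        rw [hbv]
        rcases Nat.even_or_odd (α i) with he | ho
        · rw [he.neg_one_pow, if_neg (by simpa using Nat.not_odd_iff_even.mpr he)]
        · rw [ho.neg_one_pow, if_pos ho]
    rw [Finset.prod_congr rfl hmon, ← Finset.prod_filter]
    simp [chi, smul_eq_mul]
  rw [hrepr]
  apply Submodule.sum_mem
  intro α hα
  apply Submodule.smul_mem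
  apply Submodule.subset_span
  simp only [chiSet, Finset.coe_image, Set.mem_image, Finset.mem_coe]
  refine ⟨_, ?_, rfl⟩
  rw [Finset.mem_biUnion]
  refine ⟨(α.support.filter fun i => Odd (α i)).card, ?_,
    Finset.mem_powersetCard_univ.mpr rfl⟩
  rw [Finset.mem_range, Nat.lt_succ_iff]
  have h1 : (α.support.filter fun i => Odd (α i)).card ≤ ∑ i ∈ α.support, α i := by
    rw [Finset.card_eq_sum_ones]
    refine le_trans (Finset.sum_le_sum ?_)
      (Finset.sum_le_sum_of_subset (Finset.filter_subset _ _))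
    intro i hi
    have ho : Odd (α i) := (Finset.mem_filter.mp hi).2
    rcases ho with ⟨k, hk⟩
    omega
  have h2 : ∑ i ∈ α.support, α i ≤ p.totalDegree := by
    simpa [Finsupp.sum] using MvPolynomial.le_totalDegree hα
  omega

/-- The space of functions on the cube realized by polynomials of degree at most `d`. -/
noncomputable def cubeV (n d : ℕ) : Submodule ℝ ((Fin n → Bool) → ℝ) :=
  (MvPolynomial.restrictTotalDegree (Fin n) ℝ d).map (evalCube n)

lemma cubeV_finrank_le (n d : ℕ) :
    Module.finrank ℝ ↥(cubeV n d) ≤ ∑ i ∈ Finset.range (d + 1), n.choose i := by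
  have hle : cubeV n d ≤ Submodule.span ℝ (chiSet n d : Set _) := by
    rintro x ⟨p, hp, rfl⟩
    exact evalCube_mem_span ((MvPolynomial.mem_restrictTotalDegree _ d p).mp hp)
  refine le_trans (Submodule.finrank_mono hle) ?_
  exact le_trans (finrank_span_finset_le_card _) (chiSet_card n d)

/-- The number of Boolean polynomial threshold functions of degree `d` in `n` variables.
Points of the cube `{-1,1}^n` are encoded by `σ : Fin n → Bool`, with `true ↦ 1` and
`false ↦ -1`. -/
noncomputable def ptfCount (n d : ℕ) : ℕ :=
  Nat.card {f : (Fin n → Bool) → ℝ // ∃ p : MvPolynomial (Fin n) ℝ,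
    p.totalDegree ≤ d ∧ ∀ σ : Fin n → Bool,
      MvPolynomial.eval (fun i => if σ i then (1 : ℝ) else -1) p ≠ 0 ∧
      f σ = Real.sign (MvPolynomial.eval (fun i => if σ i then (1 : ℝ) else -1) p)}


theorem ptf_count_sharp_upper_bound (n d : ℕ) (hd : 1 ≤ d) (hdn : d ≤ n) :
    ptfCount n d ≤
      2 * ∑ i ∈ Finset.range (∑ i ∈ Finset.range (d + 1), n.choose i),
        (2 ^ n - 1).choose i := by
  have hsub : {f : (Fin n → Bool) → ℝ | ∃ p : MvPolynomial (Fin n) ℝ,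
      p.totalDegree ≤ d ∧ ∀ σ : Fin n → Bool,
        MvPolynomial.eval (fun i => if σ i then (1 : ℝ) else -1) p ≠ 0 ∧
        f σ = Real.sign (MvPolynomial.eval (fun i => if σ i then (1 : ℝ) else -1) p)}
      ⊆ patSet (cubeV n d) := by
    rintro f ⟨p, hpd, hp⟩
    exact ⟨evalCube n p, ⟨p, (MvPolynomial.mem_restrictTotalDegree _ d p).mpr hpd, rfl⟩,
      fun σ => (hp σ).1, funext fun σ => (hp σ).2⟩
  have hcard : Fintype.card (Fin n → Bool) = 2 ^ n := by simp
  have h1 : ptfCount n d ≤ Nat.card ↥(patSet (cubeV n d)) :=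
    Nat.card_mono (patSet_finite _) hsub
  have h2 := pat_card_general (X := Fin n → Bool)
    (by rw [hcard]; exact Nat.one_le_two_pow) (cubeV n d)
  rw [hcard] at h2
  have h3 : coverFn (2 ^ n) (Module.finrank ℝ ↥(cubeV n d)) ≤
      coverFn (2 ^ n) (∑ i ∈ Finset.range (d + 1), n.choose i) :=
    coverFn_mono _ (cubeV_finrank_le n d)
  calc ptfCount n d ≤ _ := h1
    _ ≤ _ := h2
    _ ≤ _ := h3
    _ = _ := rfl
end

section
/- Let n, d, m, t be positive integers such that m < binom(k, ≤ d), where k = ⌊n − log₂ binom(n, ≤ d) − t⌋ is assumed nonnegative. Let x₁, …, x_m be independent random vectors, each uniformly distributed on {-1,1}^n. Then, with probability greater than 1 − 2^{−t}, the vectors x₁^{≤d}, …, x_m^{≤d} ∈ ℝ^{binom(n,≤d)} are linearly independent over ℝ. -/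
/-- The `d`-th power (tensor lift) of a vector `x ∈ ℝⁿ`. -/
def tensorLift (n d : ℕ) (x : Fin n → ℝ) : {I : Finset (Fin n) // I.card ≤ d} → ℝ :=
  fun I => ∏ i ∈ I.1, x i

/-- The point of the cube `{-1,1}^n` encoded by a vector of signs. -/
def signVec {n : ℕ} (σ : Fin n → Bool) : Fin n → ℝ :=
  fun i => if σ i then 1 else -1

open Finset Submodule Module Matrix

/-!
If the lifts of a set `S` of cube points lie in a subspace `V`, then `dim V` is at least
`lowWeightCount d #S`, the number of `x < #S` with at most `d` binary digits one; for `#S = 2 ^ k`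
this is `binom(k, ≤ d)`. To see it, order the monomials `x^I` by the binary number `∑_{i ∈ I} 2^i`
and keep those whose restriction to `S` is not spanned by the restrictions of smaller ones. The
monomials span all functions on `S`, so at least `#S` are kept; they form a lower family, since
multiplication by `xᵢ` is compatible with the order; and the kept ones of degree `≤ d` are
independent rows of the matrix whose columns are the lifts. Finally a lower family of `s` sets has
at least `lowWeightCount d s` members of size `≤ d`: split it along an element and use
`lowWeightCount (d + 1) (u + v) ≤ lowWeightCount (d + 1) u + lowWeightCount d v` for `v ≤ u`.

So, whatever the other lifts are, they span a space of dimension `≤ m < binom(k, ≤ d)`, and the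
`j`-th point lands in it with probability `< 2 ^ k / 2 ^ n`. A union bound over `j` bounds the
failure probability by `m 2 ^ k / 2 ^ n < binom(n, ≤ d) 2 ^ k / 2 ^ n ≤ 2 ^ (-t)`.
-/

namespace Nat

lemma length_bitIndices_two_pow_add {a x : ℕ} (hx : x < 2 ^ a) :
    (2 ^ a + x).bitIndices.length = x.bitIndices.length + 1 := by
  have ha : a ∉ x.bitIndices.toFinset := fun h =>
    (two_pow_le_of_mem_bitIndices (List.mem_toFinset.mp h)).not_gt hx
  have hbits : (2 ^ a + x).bitIndices.toFinset = insert a x.bitIndices.toFinset := by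
    rw [← toFinset_bitIndices_sum_two_pow (insert a _), sum_insert ha,
      sum_toFinset_bitIndices_two_pow]
  rw [← List.toFinset_card_of_nodup bitIndices_nodup,
    ← List.toFinset_card_of_nodup bitIndices_nodup, hbits, card_insert_of_notMem ha]

lemma exists_eq_two_pow_add {u : ℕ} (hu : u ≠ 0) : ∃ a u', u = 2 ^ a + u' ∧ u' < 2 ^ a := by
  have h1 := pow_log_le_self 2 hu
  have h2 := lt_pow_succ_log_self one_lt_two u
  rw [pow_succ] at h2
  exact ⟨Nat.log 2 u, u - 2 ^ Nat.log 2 u, by omega, by omega⟩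

lemma sum_range_choose_succ_succ (a d : ℕ) :
    ∑ i ∈ range (d + 2), (a + 1).choose i
      = ∑ i ∈ range (d + 2), a.choose i + ∑ i ∈ range (d + 1), a.choose i := by
  simp only [sum_range_succ' _ (d + 1), choose_succ_succ, sum_add_distrib, choose_zero_right]
  ring

end Nat

def lowWeightCount (d s : ℕ) : ℕ := #{x ∈ range s | x.bitIndices.length ≤ d}

namespace lowWeightCount

lemma mono_right {d s s' : ℕ} (h : s ≤ s') : lowWeightCount d s ≤ lowWeightCount d s' :=
  card_le_card (filter_subset_filter _ (range_subset_range.mpr h))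

lemma mono_left {d d' s : ℕ} (h : d ≤ d') : lowWeightCount d s ≤ lowWeightCount d' s :=
  card_le_card (monotone_filter_right _ fun _ _ hx => hx.trans h)

lemma one_right (d : ℕ) : lowWeightCount d 1 = 1 := by
  simp [lowWeightCount, range_one, filter_singleton]

lemma zero_left (s : ℕ) : lowWeightCount 0 s = min s 1 := by
  have : ({x ∈ range s | x.bitIndices.length ≤ 0} : Finset ℕ) = (range s).filter (· = 0) := by
    refine filter_congr fun x _ => ?_
    rw [Nat.le_zero, List.length_eq_zero_iff]
    constructor
    · intro h; simpa [h] using (Nat.sum_map_two_pow_bitIndices x).symm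
    · rintro rfl; rfl
  rw [lowWeightCount, this, filter_eq']
  rcases Nat.eq_zero_or_pos s with rfl | hs
  · rfl
  · rw [if_pos (mem_range.mpr hs), card_singleton]
    omega

lemma add (d r t : ℕ) :
    lowWeightCount d (r + t)
      = lowWeightCount d r + #{x ∈ range t | (r + x).bitIndices.length ≤ d} := by
  rw [lowWeightCount, range_add, filter_union, card_union_of_disjoint, filter_map, card_map]
  · rfl
  · refine disjoint_filter_filter (disjoint_left.mpr fun x hx hx' => ?_)
    obtain ⟨y, -, rfl⟩ := mem_map.mp hx'
    simp at hx

lemma two_pow_add {d a r : ℕ} (hr : r ≤ 2 ^ a) :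
    lowWeightCount (d + 1) (2 ^ a + r) = lowWeightCount (d + 1) (2 ^ a) + lowWeightCount d r := by
  rw [add]
  congr 1
  refine congrArg card (filter_congr fun x hx => ?_)
  rw [Nat.length_bitIndices_two_pow_add ((mem_range.mp hx).trans_le hr)]
  omega

lemma add_le_add_of_le {d r q : ℕ} (h : r ≤ q) :
    lowWeightCount (d + 1) r + lowWeightCount d q
      ≤ lowWeightCount (d + 1) q + lowWeightCount d r := by
  obtain ⟨t, rfl⟩ := Nat.exists_eq_add_of_le h
  rw [add d, add (d + 1)]
  have : #{x ∈ range t | (r + x).bitIndices.length ≤ d}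
      ≤ #{x ∈ range t | (r + x).bitIndices.length ≤ d + 1} :=
    card_le_card (monotone_filter_right _ fun _ _ hx => hx.trans d.le_succ)
  omega

lemma two_pow (d a : ℕ) : lowWeightCount d (2 ^ a) = ∑ i ∈ range (d + 1), a.choose i := by
  induction a generalizing d with
  | zero =>
    rw [pow_zero, one_right, sum_range_succ', sum_eq_zero fun i _ => Nat.choose_zero_succ i]
    rfl
  | succ a ih =>
    cases d with
    | zero => simp [zero_left, Nat.one_le_two_pow]
    | succ d =>
      rw [pow_succ, mul_two, two_pow_add le_rfl, ih, ih, Nat.sum_range_choose_succ_succ]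

lemma two_pow_add_le_of_add_le {e a r p q : ℕ} (hpq : p + q = 2 ^ a + r) (hrq : r ≤ q)
    (hqp : q ≤ p)
    (h : lowWeightCount (e + 1) (p + q) ≤ lowWeightCount (e + 1) p + lowWeightCount e q) :
    lowWeightCount (e + 1) (2 ^ a) + lowWeightCount (e + 1) r
      ≤ lowWeightCount (e + 1) p + lowWeightCount (e + 1) q := by
  rw [hpq, two_pow_add (by omega : r ≤ 2 ^ a)] at h
  have := add_le_add_of_le (d := e) hrq
  omega

lemma add_le_of_forall_add_le {e x y : ℕ}
    (h : ∀ d u v, v ≤ u → u + v = x + y →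
      lowWeightCount (d + 1) (x + y) ≤ lowWeightCount (d + 1) u + lowWeightCount d v) :
    lowWeightCount e (x + y) ≤ lowWeightCount e x + lowWeightCount e y := by
  cases e with
  | zero => simp only [zero_left]; omega
  | succ e =>
    have hmono (z : ℕ) : lowWeightCount e z ≤ lowWeightCount (e + 1) z := mono_left e.le_succ
    rcases le_total y x with hyx | hxy
    · exact (h e x y hyx rfl).trans (by have := hmono y; omega)
    · exact (h e y x hxy (add_comm y x)).trans (by have := hmono x; omega)

theorem add_le {d u v : ℕ} (hvu : v ≤ u) :
    lowWeightCount (d + 1) (u + v) ≤ lowWeightCount (d + 1) u + lowWeightCount d v := by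
  induction hN : u + v using Nat.strong_induction_on generalizing d u v with
  | _ N ih =>
  subst hN
  have subadd (e x y : ℕ) (hxy : x + y < u + v) :
      lowWeightCount e (x + y) ≤ lowWeightCount e x + lowWeightCount e y :=
    add_le_of_forall_add_le fun d _ _ h huv => ih _ hxy (d := d) h huv
  rcases Nat.eq_zero_or_pos v with rfl | hv
  · simp
  -- With `u = 2 ^ a + u'`, the interval `[u, u + v)` either stays below `2 ^ (a + 1)` or
  -- crosses it; `two_pow_add` splits off the blocks `[0, 2 ^ a)` and `[2 ^ a, 2 ^ (a + 1))`.
  obtain ⟨a, u', rfl, hu'⟩ := Nat.exists_eq_two_pow_add (by omega : u ≠ 0)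
  have ha := Nat.two_pow_pos a
  rw [two_pow_add hu'.le]
  rcases le_or_gt (u' + v) (2 ^ a) with hA | hB
  · rw [add_assoc, two_pow_add hA]
    have := subadd d u' v (by omega)
    omega
  obtain ⟨r, hr⟩ : ∃ r, u' + v = 2 ^ a + r := ⟨u' + v - 2 ^ a, by omega⟩
  rw [add_assoc, hr, ← add_assoc, ← mul_two, ← pow_succ, two_pow_add (by rw [pow_succ]; omega),
    pow_succ, mul_two, two_pow_add le_rfl]
  suffices lowWeightCount d (2 ^ a) + lowWeightCount d r
      ≤ lowWeightCount d u' + lowWeightCount d v by omega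
  cases d with
  | zero => simp only [zero_left]; omega
  | succ e =>
    rcases le_or_gt (2 ^ a) v with hB1 | hB2
    · obtain ⟨v', rfl⟩ := Nat.exists_eq_add_of_le hB1
      rw [two_pow_add (by omega : v' ≤ 2 ^ a)]
      have := ih r (by omega) (d := e) (by omega : v' ≤ u') (by omega)
      omega
    · rcases le_total v u' with h | h
      · exact two_pow_add_le_of_add_le hr (by omega) h (ih _ (by omega) h rfl)
      · rw [add_comm (lowWeightCount _ u')]
        exact two_pow_add_le_of_add_le (by omega) (by omega) h (ih _ (by omega) h rfl)

end lowWeightCount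

section LowerSet

variable {α : Type*} [DecidableEq α]

theorem Finset.isLowerSet_of_erase_mem {𝒜 : Set (Finset α)}
    (h : ∀ s ∈ 𝒜, ∀ a ∈ s, s.erase a ∈ 𝒜) : IsLowerSet 𝒜 := by
  intro s t hts hs
  induction s using Finset.strongInduction with
  | H s ih =>
    obtain rfl | hts' := hts.eq_or_ssubset
    · exact hs
    obtain ⟨a, has, hat⟩ := exists_of_ssubset hts'
    exact ih _ (erase_ssubset has) (subset_erase.mpr ⟨hts, hat⟩) (h s hs a has)

lemma Finset.card_filter_card_le_succ_eq (a : α) (F : Finset (Finset α)) (d : ℕ) :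
    #{I ∈ F | #I ≤ d + 1}
      = #{I ∈ F.nonMemberSubfamily a | #I ≤ d + 1} + #{I ∈ F.memberSubfamily a | #I ≤ d} := by
  rw [← card_memberSubfamily_add_card_nonMemberSubfamily a, add_comm]
  congr 2
  · ext I; simp only [mem_nonMemberSubfamily, mem_filter]; tauto
  · ext I
    simp only [mem_memberSubfamily, mem_filter]
    constructor
    · rintro ⟨⟨h1, h2⟩, h3⟩
      exact ⟨⟨h1, h3⟩, by rwa [card_insert_of_notMem h3, add_le_add_iff_right] at h2⟩
    · rintro ⟨⟨h1, h2⟩, h3⟩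
      exact ⟨⟨h1, by rwa [card_insert_of_notMem h2, add_le_add_iff_right]⟩, h2⟩

theorem IsLowerSet.lowWeightCount_card_le {F : Finset (Finset α)}
    (hF : IsLowerSet (F : Set (Finset α))) (d : ℕ) :
    lowWeightCount d #F ≤ #{I ∈ F | #I ≤ d} := by
  induction F using memberFamily_induction_on generalizing d with
  | empty => simp [lowWeightCount]
  | singleton_empty => simp [lowWeightCount.one_right, filter_singleton]
  | @subfamily a F ih₀ ih₁ =>
    cases d with
    | zero =>
      rw [lowWeightCount.zero_left]
      obtain rfl | ⟨I, hI⟩ := F.eq_empty_or_nonempty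
      · simp
      have : ∅ ∈ F := hF (empty_subset I) hI
      exact (min_le_right _ _).trans (one_le_card.mpr ⟨∅, mem_filter.mpr ⟨this, rfl.le⟩⟩)
    | succ d =>
      rw [card_filter_card_le_succ_eq a, ← card_memberSubfamily_add_card_nonMemberSubfamily a F,
        add_comm #(F.memberSubfamily a)]
      refine (lowWeightCount.add_le
        (card_le_card hF.memberSubfamily_subset_nonMemberSubfamily)).trans ?_
      exact add_le_add (ih₀ hF.nonMemberSubfamily _) (ih₁ hF.memberSubfamily _)

end LowerSet

section Pivots

variable (K : Type*) {ι W : Type*} [DivisionRing K] [AddCommGroup W] [Module K W]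

def pivots (v : ι → W) (r : ι → ℕ) : Set ι := {i | v i ∉ span K (v '' {j | r j < r i})}

variable {K}

theorem span_image_pivots (v : ι → W) (r : ι → ℕ) :
    span K (v '' pivots K v r) = span K (Set.range v) := by
  refine le_antisymm (span_mono (Set.image_subset_range _ _)) (span_le.mpr ?_)
  rintro _ ⟨i, rfl⟩
  induction hri : r i using Nat.strong_induction_on generalizing i with
  | _ N ih =>
  by_cases hi : i ∈ pivots K v r
  · exact subset_span ⟨i, hi, rfl⟩
  · refine span_le.mpr ?_ (not_not.mp hi)
    rintro _ ⟨j, hj, rfl⟩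
    exact ih (r j) (hri ▸ hj) j rfl

theorem linearIndepOn_pivots (v : ι → W) {r : ι → ℕ} (hr : Function.Injective r) :
    LinearIndepOn K v (pivots K v r) := by
  classical
  refine linearIndepOn_of_finite _ fun t ht htfin => ?_
  obtain ⟨s, rfl⟩ := htfin.exists_finset_coe
  clear htfin
  induction s using Finset.induction_on_max_value r with
  | empty => simp
  | insert a s has hmax ih =>
    rw [coe_insert] at ht ⊢
    rw [linearIndepOn_insert (mod_cast has)]
    refine ⟨ih ((Set.subset_insert _ _).trans ht), fun hspan => ht (Set.mem_insert a _) ?_⟩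
    refine span_mono (Set.image_mono fun x hx => ?_) hspan
    exact (hmax x hx).lt_of_ne fun h => has (hr h ▸ hx)

end Pivots

section Cube

variable {n : ℕ}

lemma signVec_mul_self (σ : Fin n → Bool) (i : Fin n) : signVec σ i * signVec σ i = 1 := by
  unfold signVec; split_ifs <;> norm_num

def cubeChar (I : Finset (Fin n)) (σ : Fin n → Bool) : ℝ := ∏ i ∈ I, signVec σ i

lemma cubeChar_singleton (i : Fin n) (σ : Fin n → Bool) : cubeChar {i} σ = signVec σ i :=
  prod_singleton _ _

lemma sum_cubeChar_mul_cubeChar (σ τ : Fin n → Bool) :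
    ∑ I, cubeChar I σ * cubeChar I τ = if σ = τ then 2 ^ n else 0 := by
  simp_rw [cubeChar, ← prod_mul_distrib, ← powerset_univ, ← prod_add_one]
  split_ifs with h
  · subst h
    simp [signVec_mul_self, one_add_one_eq_two]
  · obtain ⟨i, hi⟩ := Function.ne_iff.mp h
    refine prod_eq_zero (mem_univ i) ?_
    unfold signVec
    revert hi
    cases σ i <;> cases τ i <;> simp

def charOn (S : Finset (Fin n → Bool)) (I : Finset (Fin n)) : S → ℝ := fun σ => cubeChar I σ

theorem span_range_charOn (S : Finset (Fin n → Bool)) : span ℝ (Set.range (charOn S)) = ⊤ := by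
  refine eq_top_iff.mpr fun f _ => ?_
  rw [pi_eq_sum_univ f]
  refine sum_mem fun σ _ => smul_mem _ _ ?_
  have hδ : (fun τ : S => if σ = τ then (1 : ℝ) else 0)
      = ((2 : ℝ) ^ n)⁻¹ • ∑ I, cubeChar I σ • charOn S I := by
    ext τ
    simp only [Pi.smul_apply, Finset.sum_apply, smul_eq_mul, charOn, sum_cubeChar_mul_cubeChar,
      Subtype.ext_iff]
    split_ifs <;> simp
  rw [hδ]
  exact smul_mem _ _ (sum_mem fun I _ => smul_mem _ _ (subset_span ⟨I, rfl⟩))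

def binVal (I : Finset (Fin n)) : ℕ := ∑ i ∈ I, 2 ^ (i : ℕ)

lemma binVal_injective : Function.Injective (binVal (n := n)) := by
  intro I J h
  refine map_injective Fin.valEmbedding (Finset.geomSum_injective le_rfl ?_)
  dsimp only
  rw [sum_map, sum_map]
  exact h

lemma binVal_erase_add {I : Finset (Fin n)} {i : Fin n} (h : i ∈ I) :
    binVal (I.erase i) + 2 ^ (i : ℕ) = binVal I :=
  sum_erase_add _ _ h

lemma binVal_insert {I : Finset (Fin n)} {i : Fin n} (h : i ∉ I) :
    binVal (insert i I) = 2 ^ (i : ℕ) + binVal I :=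
  sum_insert h

lemma signVec_mul_cubeChar_erase {I : Finset (Fin n)} {i : Fin n} (h : i ∈ I) (σ : Fin n → Bool) :
    signVec σ i * cubeChar I σ = cubeChar (I.erase i) σ := by
  rw [cubeChar, ← mul_prod_erase I _ h, ← mul_assoc, signVec_mul_self, one_mul, cubeChar]

lemma signVec_mul_cubeChar_insert {I : Finset (Fin n)} {i : Fin n} (h : i ∉ I) (σ : Fin n → Bool) :
    signVec σ i * cubeChar I σ = cubeChar (insert i I) σ := by
  rw [cubeChar, cubeChar, prod_insert h]

lemma exists_signVec_mul_cubeChar {I J : Finset (Fin n)} {i : Fin n} (hi : i ∈ I)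
    (hJ : binVal J < binVal (I.erase i)) :
    ∃ J', binVal J' < binVal I ∧ ∀ σ, signVec σ i * cubeChar J σ = cubeChar J' σ := by
  have hI := binVal_erase_add hi
  have := Nat.two_pow_pos i
  by_cases hiJ : i ∈ J
  · have := binVal_erase_add hiJ
    exact ⟨J.erase i, by omega, signVec_mul_cubeChar_erase hiJ⟩
  · have := binVal_insert hiJ
    exact ⟨insert i J, by omega, signVec_mul_cubeChar_insert hiJ⟩

noncomputable def stdMonomials (S : Finset (Fin n → Bool)) : Finset (Finset (Fin n)) :=
  (Set.toFinite (pivots ℝ (charOn S) binVal)).toFinset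

lemma coe_stdMonomials (S : Finset (Fin n → Bool)) :
    (stdMonomials S : Set (Finset (Fin n))) = pivots ℝ (charOn S) binVal :=
  Set.Finite.coe_toFinset _

lemma erase_mem_stdMonomials {S : Finset (Fin n → Bool)} {I : Finset (Fin n)} {i : Fin n}
    (hI : I ∈ stdMonomials S) (hi : i ∈ I) : I.erase i ∈ stdMonomials S := by
  rw [← mem_coe, coe_stdMonomials] at hI ⊢
  -- `x^I = xᵢ x^(I \ {i})`, and multiplication by `xᵢ` sends the monomials below `I \ {i}`
  -- to monomials below `I`.
  intro hspan
  refine hI ?_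
  have hmul : charOn S I = LinearMap.mulLeft ℝ (charOn S {i}) (charOn S (I.erase i)) := by
    ext σ
    show cubeChar I σ = cubeChar {i} σ * cubeChar (I.erase i) σ
    rw [cubeChar_singleton, signVec_mul_cubeChar_insert (notMem_erase i I), insert_erase hi]
  rw [hmul]
  refine (?_ : Submodule.map _ _ ≤ _) (mem_map_of_mem hspan)
  rw [map_span, span_le]
  rintro _ ⟨_, ⟨J, hJ, rfl⟩, rfl⟩
  obtain ⟨J', hJ', hmulJ⟩ := exists_signVec_mul_cubeChar hi hJ
  refine subset_span ⟨J', hJ', ?_⟩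
  ext σ
  show cubeChar J' σ = cubeChar {i} σ * cubeChar J σ
  rw [← hmulJ, cubeChar_singleton]

theorem isLowerSet_stdMonomials (S : Finset (Fin n → Bool)) :
    IsLowerSet (stdMonomials S : Set (Finset (Fin n))) :=
  isLowerSet_of_erase_mem fun _ hI _ hi => erase_mem_stdMonomials hI hi

theorem card_le_card_stdMonomials (S : Finset (Fin n → Bool)) : #S ≤ #(stdMonomials S) := by
  calc #S = finrank ℝ (span ℝ (Set.range (charOn S))) := by
        rw [span_range_charOn, finrank_top, Module.finrank_fintype_fun_eq_card, Fintype.card_coe]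
    _ = finrank ℝ (span ℝ ((stdMonomials S).image (charOn S) : Set (S → ℝ))) := by
        rw [coe_image, coe_stdMonomials, span_image_pivots]
    _ ≤ #((stdMonomials S).image (charOn S)) := finrank_span_finset_le_card _
    _ ≤ #(stdMonomials S) := card_image_le

theorem card_filter_stdMonomials_le (S : Finset (Fin n → Bool)) (d : ℕ) :
    #{I ∈ stdMonomials S | #I ≤ d}
      ≤ finrank ℝ (span ℝ ((fun σ => tensorLift n d (signVec σ)) '' S)) := by
  set T := {I ∈ stdMonomials S | #I ≤ d}
  have hli : LinearIndepOn ℝ (charOn S) (T : Set (Finset (Fin n))) := by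
    refine (linearIndepOn_pivots _ binVal_injective).mono ?_
    rw [← coe_stdMonomials]
    exact coe_subset.mpr (filter_subset _ _)
  let A : Matrix {I : Finset (Fin n) // #I ≤ d} S ℝ := .of fun I σ => charOn S I σ
  calc #T = finrank ℝ (span ℝ (Set.range fun I : (T : Set (Finset (Fin n))) => charOn S I)) := by
        rw [finrank_span_eq_card hli]; simp
    _ ≤ finrank ℝ (span ℝ (Set.range A.row)) := by
        refine Submodule.finrank_mono (span_mono ?_)
        rintro _ ⟨I, rfl⟩
        exact ⟨⟨I, (mem_filter.mp I.2).2⟩, rfl⟩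
    _ = finrank ℝ (span ℝ (Set.range A.col)) := by
        rw [← A.rank_eq_finrank_span_row, A.rank_eq_finrank_span_cols]
    _ = finrank ℝ (span ℝ ((fun σ => tensorLift n d (signVec σ)) '' S)) := by
        rw [Set.image_eq_range]
        rfl

theorem lowWeightCount_card_le_finrank (S : Finset (Fin n → Bool)) (d : ℕ) :
    lowWeightCount d #S ≤ finrank ℝ (span ℝ ((fun σ => tensorLift n d (signVec σ)) '' S)) :=
  ((lowWeightCount.mono_right (card_le_card_stdMonomials S)).trans
    ((isLowerSet_stdMonomials S).lowWeightCount_card_le d)).trans (card_filter_stdMonomials_le S d)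

end Cube

theorem Finset.card_filter_mul_card_le {ι β : Type*} [Fintype ι] [DecidableEq ι] [Fintype β]
    (P : (ι → β) → Prop) [DecidablePred P] (j : ι) {c : ℕ}
    (hP : ∀ ω, #{b | P (Function.update ω j b)} ≤ c) :
    #{ω | P ω} * Fintype.card β ≤ c * Fintype.card (ι → β) := by
  let e : (ι → β) × β → (ι → β) × β := fun p => (Function.update p.1 j p.2, p.1 j)
  have he : Function.Involutive e := fun p => by simp [e]
  calc #{ω | P ω} * Fintype.card β = #{p : (ι → β) × β | P p.1} := by
        rw [← card_univ (α := β), ← card_product, ← univ_product_univ, filter_product_left]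
    _ = #{p : (ι → β) × β | P (Function.update p.1 j p.2)} :=
        (card_equiv he.toPerm fun p => by simp [e]).symm
    _ = ∑ ω, #{b | P (Function.update ω j b)} := by
        simp only [card_filter, Fintype.sum_prod_type]
    _ ≤ ∑ _ω : ι → β, c := sum_le_sum fun ω _ => hP ω
    _ = c * Fintype.card (ι → β) := by simp [mul_comm]

lemma mul_two_pow_le_of_le_sub_logb {B : ℝ} {n k t : ℕ} (hB : 0 < B)
    (h : (k : ℝ) ≤ n - Real.logb 2 B - t) : B * 2 ^ k * 2 ^ t ≤ 2 ^ n := by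
  have hlog : Real.logb 2 B ≤ (n - k - t : ℝ) := by linarith
  rw [Real.logb_le_iff_le_rpow one_lt_two hB] at hlog
  calc B * 2 ^ k * 2 ^ t ≤ 2 ^ ((n : ℝ) - k - t) * 2 ^ k * 2 ^ t := by gcongr
    _ = 2 ^ n := by
        rw [← Real.rpow_natCast, ← Real.rpow_natCast, ← Real.rpow_natCast, ← Real.rpow_add two_pos,
          ← Real.rpow_add two_pos]
        ring_nf

lemma sum_choose_mul_two_pow_le {n d k t : ℕ}
    (hk : (k : ℤ) = ⌊(n : ℝ) - Real.logb 2 (∑ i ∈ range (d + 1), (n.choose i : ℝ)) - t⌋) :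
    (∑ i ∈ range (d + 1), n.choose i) * 2 ^ k * 2 ^ t ≤ 2 ^ n := by
  have hfloor := Int.floor_le ((n : ℝ) - Real.logb 2 (∑ i ∈ range (d + 1), (n.choose i : ℝ)) - t)
  rw [← hk, Int.cast_natCast] at hfloor
  have hpos : (0 : ℝ) < ∑ i ∈ range (d + 1), (n.choose i : ℝ) :=
    sum_pos' (fun _ _ => Nat.cast_nonneg _) ⟨0, by simp, by simp⟩
  exact_mod_cast mul_two_pow_le_of_le_sub_logb hpos hfloor

lemma one_sub_two_zpow_neg_lt_div {a b N t : ℕ} (hab : a + b = N) (hb : b * 2 ^ t < N) :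
    1 - (2 : ℝ) ^ (-(t : ℤ)) < a / N := by
  have hN : (0 : ℝ) < N := by exact_mod_cast (Nat.zero_le _).trans_lt hb
  have hb' : (b : ℝ) * 2 ^ t < N := by exact_mod_cast hb
  have hab' : (a : ℝ) + b = N := by exact_mod_cast hab
  rw [_root_.zpow_neg, zpow_natCast, lt_div_iff₀ hN]
  have h2t : (0 : ℝ) < 2 ^ t := by positivity
  have : (N : ℝ) * (2 ^ t)⁻¹ > b := by rw [gt_iff_lt, ← div_eq_mul_inv, lt_div_iff₀ h2t]; exact hb'
  nlinarith

section Random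

open scoped Classical

variable {n : ℕ}

theorem card_filter_tensorLift_mem_lt {d k : ℕ}
    {V : Submodule ℝ ({I : Finset (Fin n) // #I ≤ d} → ℝ)}
    (hV : finrank ℝ V < ∑ i ∈ range (d + 1), k.choose i) :
    #{σ | tensorLift n d (signVec σ) ∈ V} < 2 ^ k := by
  by_contra! h
  have hS := (lowWeightCount.mono_right h).trans (lowWeightCount_card_le_finrank _ d)
  rw [lowWeightCount.two_pow] at hS
  have hV' : finrank ℝ (span ℝ ((fun σ => tensorLift n d (signVec σ)) ''
      ({σ | tensorLift n d (signVec σ) ∈ V} : Finset _))) ≤ finrank ℝ V :=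
    Submodule.finrank_mono (span_le.mpr (by rintro _ ⟨σ, hσ, rfl⟩; exact (mem_filter.mp hσ).2))
  omega

theorem card_filter_not_linearIndependent_mul_le {d m k : ℕ}
    (hmk : m < ∑ i ∈ range (d + 1), k.choose i) :
    #{ω : Fin m → Fin n → Bool | ¬ LinearIndependent ℝ fun j => tensorLift n d (signVec (ω j))}
        * 2 ^ n ≤ m * 2 ^ k * 2 ^ (n * m) := by
  set lift := fun σ : Fin n → Bool => tensorLift n d (signVec σ)
  set A := fun j : Fin m =>
    ({ω | lift (ω j) ∈ span ℝ ((lift ∘ ω) '' (Set.univ \ {j}))} : Finset (Fin m → Fin n → Bool))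
  have hsub : ({ω | ¬ LinearIndependent ℝ fun j => lift (ω j)} : Finset (Fin m → Fin n → Bool))
      ⊆ univ.biUnion A := by
    intro ω hω
    simp only [mem_filter, mem_univ, true_and, linearIndependent_iff_notMem_span, not_forall,
      not_not] at hω
    simpa [A] using hω
  have hA : ∀ j, #(A j) * 2 ^ n ≤ 2 ^ k * 2 ^ (n * m) := by
    intro j
    suffices #(A j) * Fintype.card (Fin n → Bool) ≤ 2 ^ k * Fintype.card (Fin m → Fin n → Bool) by
      simpa [Fintype.card_fun, ← pow_mul, mul_comm] using this
    refine card_filter_mul_card_le _ j fun ω => ?_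
    have hV : finrank ℝ (span ℝ ((lift ∘ ω) '' (Set.univ \ {j})))
        < ∑ i ∈ range (d + 1), k.choose i :=
      lt_of_le_of_lt ((Submodule.finrank_mono (span_mono (Set.image_subset_range _ _))).trans
        ((finrank_range_le_card _).trans (Fintype.card_fin m).le)) hmk
    refine le_of_eq_of_le ?_ (card_filter_tensorLift_mem_lt hV).le
    refine congrArg card (filter_congr fun b _ => ?_)
    have himg : (lift ∘ Function.update ω j b) '' (Set.univ \ {j})
        = (lift ∘ ω) '' (Set.univ \ {j}) :=
      Set.image_congr fun i hi => by
        rw [Function.comp_apply, Function.update_of_ne (by simpa using hi), Function.comp_apply]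
    rw [Function.update_self, himg]
  calc #{ω : Fin m → Fin n → Bool | ¬ LinearIndependent ℝ fun j => lift (ω j)} * 2 ^ n
      ≤ (∑ j, #(A j)) * 2 ^ n := Nat.mul_le_mul_right _ ((card_le_card hsub).trans card_biUnion_le)
    _ = ∑ j, #(A j) * 2 ^ n := sum_mul _ _ _
    _ ≤ ∑ _j : Fin m, 2 ^ k * 2 ^ (n * m) := sum_le_sum fun j _ => hA j
    _ = m * 2 ^ k * 2 ^ (n * m) := by simp [mul_assoc]

theorem card_filter_not_linearIndependent_mul_two_pow_lt {d m k t : ℕ}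
    (hmk : m < ∑ i ∈ range (d + 1), k.choose i)
    (hB : (∑ i ∈ range (d + 1), n.choose i) * 2 ^ k * 2 ^ t ≤ 2 ^ n) :
    #{ω : Fin m → Fin n → Bool | ¬ LinearIndependent ℝ fun j => tensorLift n d (signVec (ω j))}
        * 2 ^ t < 2 ^ (n * m) := by
  set B := ∑ i ∈ range (d + 1), n.choose i
  have hBpos : 0 < B := sum_pos' (fun _ _ => Nat.zero_le _) ⟨0, by simp, by simp⟩
  have hkn : k ≤ n := by
    refine (Nat.pow_le_pow_iff_right one_lt_two).mp (le_trans ?_ hB)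
    calc 2 ^ k ≤ B * 2 ^ k := Nat.le_mul_of_pos_left _ hBpos
      _ ≤ B * 2 ^ k * 2 ^ t := Nat.le_mul_of_pos_right _ (Nat.two_pow_pos t)
  have hmB : m < B := hmk.trans_le (sum_le_sum fun i _ => Nat.choose_le_choose i hkn)
  refine Nat.lt_of_mul_lt_mul_right (a := 2 ^ n) ?_
  calc _ ≤ m * 2 ^ k * 2 ^ (n * m) * 2 ^ t := by
        rw [mul_right_comm]
        exact Nat.mul_le_mul_right _ (card_filter_not_linearIndependent_mul_le hmk)
    _ = m * 2 ^ k * 2 ^ t * 2 ^ (n * m) := by ring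
    _ < 2 ^ n * 2 ^ (n * m) := by gcongr; exact lt_of_lt_of_le (by gcongr) hB
    _ = 2 ^ (n * m) * 2 ^ n := mul_comm _ _

end Random

/-- The sample space `Fin m → Fin n → Bool` encodes `m` independent points
of the cube `{-1,1}^n`, each uniformly distributed; the probability of an event is its
cardinality divided by `2^(n*m)`. -/
theorem random_tensors_linear_independence_general (n d m t : ℕ)
    (k : ℕ)
    (hk : (k : ℤ) = ⌊(n : ℝ) -
      Real.logb 2 (∑ i ∈ Finset.range (d + 1), (n.choose i : ℝ)) - t⌋)
    (hmk : m < ∑ i ∈ Finset.range (d + 1), k.choose i) :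
    1 - (2 : ℝ) ^ (-(t : ℤ)) <
      (Nat.card {ω : Fin m → Fin n → Bool //
          LinearIndependent ℝ (fun j : Fin m => tensorLift n d (signVec (ω j)))} : ℝ) /
        2 ^ (n * m) := by
  classical
  have hbad := card_filter_not_linearIndependent_mul_two_pow_lt hmk (sum_choose_mul_two_pow_le hk)
  have hsum := card_filter_add_card_filter_not (s := univ)
    fun ω : Fin m → Fin n → Bool => LinearIndependent ℝ fun j => tensorLift n d (signVec (ω j))
  rw [card_univ, Fintype.card_fun, Fintype.card_fun, Fintype.card_fin, Fintype.card_bool,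
    Fintype.card_fin, ← pow_mul] at hsum
  rw [Nat.card_eq_fintype_card, Fintype.card_subtype]
  exact_mod_cast one_sub_two_zpow_neg_lt_div hsum hbad

/-- Abbe–Shpilka–Wigderson: random tensor lifts are linearly independent with high
probability.  The sample space `Fin m → Fin n → Bool` encodes `m` independent points
of the cube `{-1,1}^n`, each uniformly distributed; the probability of an event is its
cardinality divided by `2^(n*m)`. -/
theorem random_tensors_linear_independence (n d m t : ℕ)
    (hn : 1 ≤ n) (hd : 1 ≤ d) (hm : 1 ≤ m) (ht : 1 ≤ t) (k : ℕ)
    (hk : (k : ℤ) = ⌊(n : ℝ) -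
      Real.logb 2 (∑ i ∈ Finset.range (d + 1), (n.choose i : ℝ)) - t⌋)
    (hmk : m < ∑ i ∈ Finset.range (d + 1), k.choose i) :
    1 - (2 : ℝ) ^ (-(t : ℤ)) <
      (Nat.card {ω : Fin m → Fin n → Bool //
          LinearIndependent ℝ (fun j : Fin m => tensorLift n d (signVec (ω j)))} : ℝ) /
        2 ^ (n * m) :=
  random_tensors_linear_independence_general n d m t k hk hmk
end

section
/- Littlewood–Offord Lemma: let n be a positive integer, let a₁, …, a_n be nonzero real numbers, and let u ∈ ℝ. Then the number of sign vectors ε ∈ {-1,1}^n satisfying ∑_{k=1}^{n} a_k ε_k = u is at most binom(n, ⌊n/2⌋). Equivalently, if ξ₁, …, ξ_n are independent uniform ±1 random variables, then ℙ(∑_{k=1}^{n} a_k ξ_k = u) ≤ 2^{−n} binom(n, ⌊n/2⌋). -/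
/-!
Replace each `a k` by `|a k|` and record a sign vector `ε` by the set `S` of indices where
`ε k` agrees with the sign of `a k`; then `∑ a k ε k = 2 ∑_{k ∈ S} |a k| - ∑ |a k|`, so the
solutions of `∑ a k ε k = u` correspond injectively to sets `S` with a prescribed `|a|`-weight.
Since all weights are positive, no such set is contained in another, and Sperner's theorem
bounds their number by `n.choose (n / 2)`.
-/

open Finset

theorem isAntichain_setOf_sum_eq {ι M : Type*} [AddCommMonoid M] [PartialOrder M]
    [IsOrderedCancelAddMonoid M] {b : ι → M} (hb : ∀ i, 0 < b i) (v : M) :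
    IsAntichain (· ⊆ ·) {s : Finset ι | ∑ i ∈ s, b i = v} := by
  intro s hs t ht hne hst
  obtain ⟨i, hit, his⟩ := exists_of_ssubset (ssubset_of_subset_of_ne hst hne)
  have hlt : ∑ i ∈ s, b i < ∑ i ∈ t, b i :=
    sum_lt_sum_of_subset hst hit his (hb i) fun j _ _ => (hb j).le
  exact hlt.ne (hs.trans ht.symm)

theorem card_filter_sum_eq_le_choose {ι : Type*} [Fintype ι] [DecidableEq ι] {b : ι → ℝ}
    (hb : ∀ i, 0 < b i) (v : ℝ) :
    #{s : Finset ι | ∑ i ∈ s, b i = v} ≤ (Fintype.card ι).choose (Fintype.card ι / 2) :=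
  IsAntichain.sperner <| by simpa using isAntichain_setOf_sum_eq hb v

theorem mul_ite_one_neg_one_eq {a : ℝ} (ha : a ≠ 0) (e : Bool) :
    a * (if e then 1 else -1) = 2 * (if e = decide (0 < a) then |a| else 0) - |a| := by
  rcases ha.lt_or_gt with ha | ha
  · cases e <;> simp [ha, ha.not_gt, abs_of_neg]; ring
  · cases e <;> simp [ha, abs_of_pos]; ring

section SignAgreement

variable {ι : Type*} [Fintype ι]

noncomputable def signAgreementSet (a : ι → ℝ) (ε : ι → Bool) : Finset ι :=
  {k | ε k = decide (0 < a k)}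

theorem signAgreementSet_injective (a : ι → ℝ) : Function.Injective (signAgreementSet a) := by
  intro ε ε' h
  funext k
  have hk : ε k = decide (0 < a k) ↔ ε' k = decide (0 < a k) := by
    simpa [signAgreementSet] using congrArg (k ∈ ·) h
  revert hk
  cases ε k <;> cases ε' k <;> cases decide (0 < a k) <;> simp

theorem sum_mul_ite_one_neg_one_eq {a : ι → ℝ} (ha : ∀ k, a k ≠ 0) (ε : ι → Bool) :
    ∑ k, a k * (if ε k then (1 : ℝ) else -1) =
      2 * ∑ k ∈ signAgreementSet a ε, |a k| - ∑ k, |a k| := by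
  simp only [fun k => mul_ite_one_neg_one_eq (ha k) (ε k), sum_sub_distrib, ← mul_sum,
    ← sum_filter, signAgreementSet]

theorem card_signs_sum_eq_le_choose [DecidableEq ι] {a : ι → ℝ} (ha : ∀ k, a k ≠ 0)
    (u : ℝ) :
    Nat.card {ε : ι → Bool // ∑ k, a k * (if ε k then (1 : ℝ) else -1) = u} ≤
      (Fintype.card ι).choose (Fintype.card ι / 2) := by
  set v := (u + ∑ k, |a k|) / 2
  have hweight (ε : ι → Bool) (hε : ∑ k, a k * (if ε k then (1 : ℝ) else -1) = u) :
      signAgreementSet a ε ∈ ({s | ∑ k ∈ s, |a k| = v} : Finset (Finset ι)) := by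
    rw [sum_mul_ite_one_neg_one_eq ha] at hε
    simp only [mem_filter, mem_univ, true_and, v]
    linarith
  calc Nat.card {ε : ι → Bool // ∑ k, a k * (if ε k then (1 : ℝ) else -1) = u}
      ≤ Nat.card ({s | ∑ k ∈ s, |a k| = v} : Finset (Finset ι)) :=
        Nat.card_le_card_of_injective (fun ε => ⟨_, hweight ε.1 ε.2⟩)
          fun ε ε' h => Subtype.ext (signAgreementSet_injective a (congrArg Subtype.val h))
    _ ≤ _ := by
        rw [Nat.card_eq_fintype_card, Fintype.card_coe]
        exact card_filter_sum_eq_le_choose (fun k => abs_pos.2 (ha k)) v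

end SignAgreement

theorem littlewood_offord_general (n : ℕ) (a : Fin n → ℝ) (ha : ∀ k, a k ≠ 0)
    (u : ℝ) :
    Nat.card {ε : Fin n → Bool //
        (∑ k, a k * (if ε k then (1 : ℝ) else -1)) = u} ≤ n.choose (n / 2) ∧
    (Nat.card {ε : Fin n → Bool //
        (∑ k, a k * (if ε k then (1 : ℝ) else -1)) = u} : ℝ) / 2 ^ n ≤
      (2 : ℝ) ^ (-(n : ℤ)) * (n.choose (n / 2) : ℝ) := by
  have hcard := card_signs_sum_eq_le_choose ha u
  rw [Fintype.card_fin] at hcard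
  refine ⟨hcard, ?_⟩
  rw [zpow_neg, zpow_natCast, ← div_eq_inv_mul]
  gcongr

theorem littlewood_offord (n : ℕ) (hn : 1 ≤ n) (a : Fin n → ℝ) (ha : ∀ k, a k ≠ 0)
    (u : ℝ) :
    Nat.card {ε : Fin n → Bool //
        (∑ k, a k * (if ε k then (1 : ℝ) else -1)) = u} ≤ n.choose (n / 2) ∧
    (Nat.card {ε : Fin n → Bool //
        (∑ k, a k * (if ε k then (1 : ℝ) else -1)) = u} : ℝ) / 2 ^ n ≤
      (2 : ℝ) ^ (-(n : ℤ)) * (n.choose (n / 2) : ℝ) :=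
  littlewood_offord_general n a ha u
end
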